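/- arXiv:1907.11504 — 10 statements merged into one kernel-verified Lean document; each statement's English description precedes it below -/
import Mathlib

section
/- Let P ⊆ M_d⁺ be a nonempty bounded set of positive semidefinite matrices and let A = her(closed convex hull of P), where her(C) = {A ∈ M_d⁺ : ∃ B ∈ C, A ≤ B}. Then A is a convex corner (a nonempty closed convex hereditary subset of M_d⁺), and its anti-blocker satisfies A^♯ = P^♯. -/
open Matrix
open scoped ComplexOrder Matrix.Norms.L2Operator

/-- The hereditary closure `her(C)` with respect to the Loewner order. -/
def her {d : ℕ} (C : Set (Matrix (Fin d) (Fin d) ℂ)) : Set (Matrix (Fin d) (Fin d) ℂ) :=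
  {A | A.PosSemidef ∧ ∃ B ∈ C, (B - A).PosSemidef}

/-- A convex corner: a nonempty closed convex hereditary subset of the positive cone. -/
structure IsConvexCorner {d : ℕ} (A : Set (Matrix (Fin d) (Fin d) ℂ)) : Prop where
  nonempty : A.Nonempty
  subset_psd : ∀ M ∈ A, M.PosSemidef
  isClosed : IsClosed A
  convex : Convex ℝ A
  hereditary : ∀ M ∈ A, ∀ B : Matrix (Fin d) (Fin d) ℂ,
    B.PosSemidef → (M - B).PosSemidef → B ∈ A

/-- The anti-blocker of a set of positive semidefinite matrices. -/
def antiBlocker {d : ℕ} (A : Set (Matrix (Fin d) (Fin d) ℂ)) :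
    Set (Matrix (Fin d) (Fin d) ℂ) :=
  {B | B.PosSemidef ∧ ∀ M ∈ A, (M * B).trace.re ≤ 1}

open scoped Pointwise

section Aux
variable {d : ℕ}



lemma psd_smul {t : ℝ} (ht : 0 ≤ t) {M : Matrix (Fin d) (Fin d) ℂ} (hM : M.PosSemidef) :
    (t • M).PosSemidef := by
  rw [show t • M = ((t : ℂ)) • M from (algebraMap_smul ℂ t M).symm]
  constructor
  · show ((t : ℂ) • M)ᴴ = (t : ℂ) • M
    rw [Matrix.conjTranspose_smul, hM.1]
    congr 1
    simp [Complex.ext_iff]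
  · intro x
    exact (hM.smul (show (0 : ℂ) ≤ (t : ℂ) by exact_mod_cast ht)).2 x

lemma trace_re_nonneg {M : Matrix (Fin d) (Fin d) ℂ} (hM : M.PosSemidef) : 0 ≤ M.trace.re := by
  have h : ∀ i, 0 ≤ (M i i).re := fun i => by
    have := hM.re_dotProduct_nonneg (Pi.single i 1)
    simpa [dotProduct, Pi.single_apply, apply_ite, Finset.sum_ite_eq] using this
  rw [Matrix.trace, Complex.re_sum]
  exact Finset.sum_nonneg fun i _ => h i

lemma trace_mul_re_nonneg {A B : Matrix (Fin d) (Fin d) ℂ} (hA : A.PosSemidef)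
    (hB : B.PosSemidef) : 0 ≤ ((A * B).trace).re := by
  obtain ⟨C, rfl⟩ : ∃ C : Matrix (Fin d) (Fin d) ℂ, A = Cᴴ * C := by
    open scoped MatrixOrder in
    have h0 : (0 : Matrix (Fin d) (Fin d) ℂ) ≤ A := Matrix.nonneg_iff_posSemidef.mpr hA
    open scoped MatrixOrder in
    refine ⟨CFC.sqrt A, ?_⟩
    open scoped MatrixOrder in
    have hs : (CFC.sqrt A)ᴴ = CFC.sqrt A := (CFC.sqrt_nonneg A).isSelfAdjoint
    open scoped MatrixOrder in
    rw [hs, CFC.sqrt_mul_sqrt_self A h0]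
  rw [mul_assoc, Matrix.trace_mul_comm]
  exact trace_re_nonneg (hB.mul_mul_conjTranspose_same C)

lemma isClosed_psd : IsClosed {M : Matrix (Fin d) (Fin d) ℂ | M.PosSemidef} := by
  have h1 : IsClosed {c : ℂ | 0 ≤ c} := by
    have : {c : ℂ | 0 ≤ c} = {c : ℂ | 0 ≤ c.re} ∩ {c : ℂ | (0:ℝ) = c.im} := by
      ext c; simp [Complex.le_def]
    rw [this]
    exact (isClosed_le continuous_const Complex.continuous_re).inter
      (isClosed_eq continuous_const Complex.continuous_im)
  have : {M : Matrix (Fin d) (Fin d) ℂ | M.PosSemidef} =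
      {M | Mᴴ = M} ∩ ⋂ x : Fin d → ℂ, {M | 0 ≤ dotProduct (star x) (M *ᵥ x)} := by
    ext M
    simp only [Set.mem_setOf_eq, Set.mem_inter_iff, Set.mem_iInter]
    exact Matrix.posSemidef_iff_dotProduct_mulVec
  rw [this]
  refine (isClosed_eq continuous_id.matrix_conjTranspose continuous_id).inter ?_
  exact isClosed_iInter fun x => h1.preimage
    ((continuous_const).dotProduct (continuous_id.matrix_mulVec continuous_const))

end Aux

/-- For a nonempty bounded set `P` of positive semidefinite matrices,
`her(closed convex hull of P)` is a convex corner whose anti-blocker equals `P^♯`. -/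
theorem stmt6 (d : ℕ) (P : Set (Matrix (Fin d) (Fin d) ℂ))
    (hne : P.Nonempty) (hpos : ∀ M ∈ P, M.PosSemidef)
    (hbdd : Bornology.IsBounded P) :
    IsConvexCorner (her (closure (convexHull ℝ P))) ∧
    antiBlocker (her (closure (convexHull ℝ P))) = antiBlocker P := by
  set S : Set (Matrix (Fin d) (Fin d) ℂ) := {M | M.PosSemidef} with hSdef
  set C := closure (convexHull ℝ P) with hCdef
  have hSconv : Convex ℝ S := fun x hx y hy a b ha hb _ =>
    (psd_smul ha hx).add (psd_smul hb hy)
  have hCconv : Convex ℝ C := (convex_convexHull ℝ P).closure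
  have hPC : P ⊆ C := (subset_convexHull ℝ P).trans subset_closure
  have hPH : P ⊆ her C := fun M hM =>
    ⟨hpos M hM, M, hPC hM, by simpa using Matrix.PosSemidef.zero⟩
  have hCbdd : Bornology.IsBounded C := (isBounded_convexHull.mpr hbdd).closure
  have hCcpt : IsCompact C := Metric.isCompact_of_isClosed_isBounded isClosed_closure hCbdd
  have hher : her C = S ∩ (C + (-S)) := by
    ext A
    constructor
    · rintro ⟨hA, B, hB, hBA⟩
      refine ⟨hA, Set.mem_add.mpr ⟨B, hB, -(B - A), ?_, by abel⟩⟩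
      rw [Set.mem_neg]
      simpa [hSdef] using hBA
    · rintro ⟨hA, hA2⟩
      obtain ⟨B, hB, N, hN, rfl⟩ := Set.mem_add.mp hA2
      rw [Set.mem_neg] at hN
      refine ⟨hA, B, hB, ?_⟩
      have : B - (B + N) = -N := by abel
      rw [this]; exact hN
  constructor
  · constructor
    · exact ⟨hne.choose, hPH hne.choose_spec⟩
    · exact fun M hM => hM.1
    · rw [hher]
      exact isClosed_psd.inter ((isClosed_psd.neg).add_left_of_isCompact hCcpt)
    · rintro A1 ⟨hA1, B1, hB1, h1'⟩ A2 ⟨hA2, B2, hB2, h2'⟩ a b ha hb hab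
      refine ⟨(psd_smul ha hA1).add (psd_smul hb hA2), a • B1 + b • B2,
        hCconv hB1 hB2 ha hb hab, ?_⟩
      have : a • B1 + b • B2 - (a • A1 + b • A2) = a • (B1 - A1) + b • (B2 - A2) := by
        rw [smul_sub, smul_sub]; abel
      rw [this]
      exact (psd_smul ha h1').add (psd_smul hb h2')
    · rintro M ⟨hMp, B', hB', h'⟩ B hB hMB
      refine ⟨hB, B', hB', ?_⟩
      have := h'.add hMB
      rwa [sub_add_sub_cancel] at this
  · ext B
    simp only [antiBlocker, Set.mem_setOf_eq]
    constructor
    · rintro ⟨hB, h⟩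
      exact ⟨hB, fun M hM => h M (hPH hM)⟩
    · rintro ⟨hB, h⟩
      refine ⟨hB, ?_⟩
      rintro M ⟨hMp, B', hB', hdiff⟩
      have key : ∀ X ∈ C, ((X * B).trace).re ≤ 1 := by
        have hTconv : Convex ℝ {X : Matrix (Fin d) (Fin d) ℂ | ((X * B).trace).re ≤ 1} := by
          intro x hx y hy a b ha hb hab
          simp only [Set.mem_setOf_eq] at hx hy ⊢
          have heq : ((a • x + b • y) * B).trace = a • (x * B).trace + b • (y * B).trace := by
            rw [add_mul, smul_mul_assoc, smul_mul_assoc, Matrix.trace_add,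
              Matrix.trace_smul, Matrix.trace_smul]
          rw [heq, Complex.add_re, Complex.smul_re, Complex.smul_re]
          have h1 := mul_le_mul_of_nonneg_left hx ha
          have h2 := mul_le_mul_of_nonneg_left hy hb
          simp only [smul_eq_mul]
          linarith
        have hTcl : IsClosed {X : Matrix (Fin d) (Fin d) ℂ | ((X * B).trace).re ≤ 1} :=
          isClosed_le (Complex.continuous_re.comp
            ((continuous_id.matrix_mul continuous_const).matrix_trace)) continuous_const
        exact fun X hX => closure_minimal (convexHull_min (fun M hM => h M hM) hTconv) hTcl hX
      have h1 : 0 ≤ (((B' - M) * B).trace).re := trace_mul_re_nonneg hdiff hB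
      have h2 : ((B' - M) * B).trace = (B' * B).trace - (M * B).trace := by
        rw [Matrix.sub_mul, Matrix.trace_sub]
      have h3 := key B' hB'
      rw [h2, Complex.sub_re] at h1
      linarith
end

section
/- Let P ⊆ M_d⁺ be a closed set of orthogonal projections that is hereditary for projections (if P ∈ P and P′ ≤ P is a projection then P′ ∈ P), and let A = her(closed convex hull of P). If Q is an orthogonal projection with Q ∈ A, then Q ∈ P. -/
open Matrix
open scoped ComplexOrder Matrix.Norms.L2Operator

/-- A Hermitian idempotent is positive semidefinite. -/
lemma psd_of_projAux {d : ℕ} {M : Matrix (Fin d) (Fin d) ℂ} (h1 : Mᴴ = M) (h2 : M * M = M) :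
    M.PosSemidef := by
  have : M = Mᴴ * M := by rw [h1, h2]
  rw [this]
  exact Matrix.posSemidef_conjTranspose_mul_self M

/-- The real part of the trace of a PSD matrix is nonnegative. -/
lemma trace_re_nonneg_of_psdAux {d : ℕ} {A : Matrix (Fin d) (Fin d) ℂ} (h : A.PosSemidef) :
    0 ≤ A.trace.re := by
  have hd : ∀ i, 0 ≤ (A i i).re := by
    intro i
    have h0 := h.dotProduct_mulVec_nonneg (Pi.single i 1)
    have he : dotProduct (star (Pi.single i 1 : Fin d → ℂ)) (A *ᵥ Pi.single i 1) = A i i := by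
      simp [dotProduct, Matrix.mulVec, Pi.single_apply, mul_comm]
    rw [he] at h0
    exact (Complex.le_def.mp h0).1
  have ht : A.trace.re = ∑ i, (A i i).re := by
    simp [Matrix.trace, Matrix.diag, Complex.re_sum]
  rw [ht]
  exact Finset.sum_nonneg fun i _ => hd i

/-- If the real part of the trace of `Xᴴ * X` vanishes, then `X = 0`. -/
lemma eq_zero_of_trace_reAux {d : ℕ} {X : Matrix (Fin d) (Fin d) ℂ}
    (h : (Xᴴ * X).trace.re = 0) : X = 0 := by
  have ht : (Xᴴ * X).trace.re = ∑ j, ∑ i, Complex.normSq (X i j) := by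
    simp [Matrix.trace, Matrix.diag, Matrix.mul_apply, Complex.re_sum, Matrix.conjTranspose_apply,
      Complex.normSq_eq_conj_mul_self, Complex.normSq_apply]
  rw [ht] at h
  have hz : ∀ j ∈ Finset.univ, ∀ i ∈ Finset.univ, Complex.normSq (X i j) = 0 := by
    have := (Finset.sum_eq_zero_iff_of_nonneg (fun j _ =>
      Finset.sum_nonneg fun i _ => Complex.normSq_nonneg _)).mp h
    intro j hj i hi
    exact (Finset.sum_eq_zero_iff_of_nonneg (fun i _ => Complex.normSq_nonneg _)).mp
      (this j hj) i hi
  ext i j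
  simpa using Complex.normSq_eq_zero.mp (hz j (Finset.mem_univ _) i (Finset.mem_univ _))

/-- If `P` is a closed, projection-hereditary set of orthogonal projections and
`Q` is a projection lying in `her(closed convex hull of P)`, then `Q ∈ P`. -/
theorem stmt7 (d : ℕ) (P : Set (Matrix (Fin d) (Fin d) ℂ))
    (hproj : ∀ M ∈ P, Mᴴ = M ∧ M * M = M)
    (hclosed : IsClosed P)
    (hher : ∀ M ∈ P, ∀ Q : Matrix (Fin d) (Fin d) ℂ,
      Qᴴ = Q → Q * Q = Q → (M - Q).PosSemidef → Q ∈ P)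
    (Q : Matrix (Fin d) (Fin d) ℂ)
    (hQ : Qᴴ = Q ∧ Q * Q = Q)
    (hQmem : Q ∈ her (closure (convexHull ℝ P))) :
    Q ∈ P := by
  obtain ⟨hQps, B, hB, hBQ⟩ := hQmem
  obtain ⟨hQh, hQsq⟩ := hQ
  -- P is nonempty
  have hPne : P.Nonempty := by
    rcases Set.eq_empty_or_nonempty P with h | h
    · rw [h] at hB; simp at hB
    · exact h
  -- P is compact
  have hbd : ∀ M ∈ P, ‖M‖ ≤ 1 := by
    intro M hM
    have h1 : ‖M‖ * ‖M‖ = ‖M‖ := by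
      conv_lhs => rw [← Matrix.l2_opNorm_conjTranspose_mul_self M]
      rw [(hproj M hM).1, (hproj M hM).2]
    nlinarith [norm_nonneg M]
  have hcpt : IsCompact P := by
    refine Metric.isCompact_of_isClosed_isBounded hclosed ?_
    exact (Metric.isBounded_iff_subset_closedBall 0).mpr
      ⟨1, fun M hM => by simpa [mem_closedBall_zero_iff] using hbd M hM⟩
  -- the linear functional f
  set f : Matrix (Fin d) (Fin d) ℂ → ℝ := fun M => ((Q * M * Q).trace).re with hf
  have hflin : IsLinearMap ℝ f := by
    constructor
    · intro X Y
      simp only [hf, mul_add, add_mul, Matrix.trace_add, Complex.add_re]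
    · intro a X
      simp only [hf, Matrix.mul_smul, Matrix.smul_mul, Matrix.trace_smul, Complex.smul_re,
        smul_eq_mul]
  have hfc : Continuous f := by
    apply Complex.continuous_re.comp
    exact Continuous.matrix_trace ((continuous_const.matrix_mul continuous_id).matrix_mul
      continuous_const)
  -- f M ≤ f Q for all M ∈ P
  have hfle : ∀ M ∈ P, f M ≤ f Q := by
    intro M hM
    obtain ⟨h1, h2⟩ := hproj M hM
    have hcompl : ((1 : Matrix (Fin d) (Fin d) ℂ) - M).PosSemidef := by
      refine psd_of_projAux ?_ ?_
      · rw [Matrix.conjTranspose_sub, Matrix.conjTranspose_one, h1]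
      · rw [mul_sub, mul_one, sub_mul, one_mul, h2, sub_self, sub_zero]
    have hD : (Q * ((1 : Matrix (Fin d) (Fin d) ℂ) - M) * Q).PosSemidef := by
      have := hcompl.conjTranspose_mul_mul_same Q
      rwa [hQh] at this
    have htr : (Q * ((1 : Matrix (Fin d) (Fin d) ℂ) - M) * Q).trace.re = f Q - f M := by
      have he : Q * ((1 : Matrix (Fin d) (Fin d) ℂ) - M) * Q = Q * Q - Q * M * Q := by
        rw [mul_sub, mul_one, sub_mul]
      rw [he, Matrix.trace_sub, Complex.sub_re]
      simp [hf, hQsq]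
    have := trace_re_nonneg_of_psdAux hD
    rw [htr] at this
    linarith
  -- f Q ≤ f B
  have hfBQ : f Q ≤ f B := by
    have hD : (Q * (B - Q) * Q).PosSemidef := by
      have := hBQ.conjTranspose_mul_mul_same Q
      rwa [hQh] at this
    have htr : (Q * (B - Q) * Q).trace.re = f B - f Q := by
      have he : Q * (B - Q) * Q = Q * B * Q - Q * Q * Q := by
        rw [mul_sub, sub_mul]
      rw [he, Matrix.trace_sub, Complex.sub_re]
    have := trace_re_nonneg_of_psdAux hD
    rw [htr] at this
    linarith
  -- maximizer over compact P
  obtain ⟨M₀, hM₀, hmax⟩ := hcpt.exists_isMaxOn hPne hfc.continuousOn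
  obtain ⟨h1, h2⟩ := hproj M₀ hM₀
  -- closure of convex hull lies in the halfspace {f ≤ f M₀}
  have hsub : closure (convexHull ℝ P) ⊆ {X | f X ≤ f M₀} := by
    refine closure_minimal (convexHull_min (fun M hM => hmax hM) ?_) ?_
    · exact convex_halfSpace_le hflin _
    · exact isClosed_le hfc continuous_const
  have hfB : f B ≤ f M₀ := hsub hB
  -- hence f M₀ = f Q
  have heq : f M₀ = f Q := le_antisymm (hfle M₀ hM₀) (by linarith [hfBQ])
  -- deduce (1 - M₀) * Q = 0
  have hcompl1 : ((1 : Matrix (Fin d) (Fin d) ℂ) - M₀)ᴴ = 1 - M₀ := by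
    rw [Matrix.conjTranspose_sub, Matrix.conjTranspose_one, h1]
  have hcompl2 : ((1 : Matrix (Fin d) (Fin d) ℂ) - M₀) * (1 - M₀) = 1 - M₀ := by
    rw [mul_sub, mul_one, sub_mul, one_mul, h2, sub_self, sub_zero]
  have hXzero : ((1 : Matrix (Fin d) (Fin d) ℂ) - M₀) * Q = 0 := by
    apply eq_zero_of_trace_reAux
    have he : (((1 : Matrix (Fin d) (Fin d) ℂ) - M₀) * Q)ᴴ * (((1 : Matrix (Fin d) (Fin d) ℂ) - M₀) * Q)
        = Q * Q - Q * M₀ * Q := by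
      rw [Matrix.conjTranspose_mul, hcompl1, hQh]
      calc Q * (1 - M₀) * ((1 - M₀) * Q) = Q * ((1 - M₀) * (1 - M₀)) * Q := by
            simp only [Matrix.mul_assoc]
        _ = Q * (1 - M₀) * Q := by rw [hcompl2]
        _ = Q * Q - Q * M₀ * Q := by rw [mul_sub, mul_one, sub_mul]
    rw [he, Matrix.trace_sub, Complex.sub_re]
    have : ((Q * Q).trace).re = f Q := by simp [hf, hQsq]
    rw [this]
    have : ((Q * M₀ * Q).trace).re = f M₀ := rfl
    rw [this, heq, sub_self]
  have hMQ : M₀ * Q = Q := by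
    have := hXzero
    rw [sub_mul, one_mul, sub_eq_zero] at this
    exact this.symm
  have hQM : Q * M₀ = Q := by
    have := congrArg Matrix.conjTranspose hMQ
    rwa [Matrix.conjTranspose_mul, hQh, h1] at this
  -- M₀ - Q is a projection, hence PSD
  have hR : (M₀ - Q).PosSemidef := by
    refine psd_of_projAux ?_ ?_
    · rw [Matrix.conjTranspose_sub, h1, hQh]
    · rw [mul_sub, sub_mul, sub_mul, h2, hMQ, hQM, hQsq]
      abel
  exact hher M₀ hM₀ Q hQh hQsq hR
end

section
/- Let A be a diagonal convex corner and B a convex corner in M_d such that A = D_d ∩ B = Δ(B), where Δ: M_d → D_d is the projection onto diagonal matrices. Then A^♭ = D_d ∩ B^♯ = Δ(B^♯), where A^♭ = {B ∈ D_d⁺ : Tr(AB) ≤ 1 for all A ∈ A} and B^♯ = {C ∈ M_d⁺ : Tr(BC) ≤ 1 for all B ∈ B}. -/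
open Matrix
open scoped ComplexOrder

/-- A matrix is diagonal. -/
def IsDiag' {d : ℕ} (A : Matrix (Fin d) (Fin d) ℂ) : Prop :=
  ∀ i j, i ≠ j → A i j = 0

/-- The conditional expectation onto the diagonal algebra. -/
def diagExp {d : ℕ} (A : Matrix (Fin d) (Fin d) ℂ) : Matrix (Fin d) (Fin d) ℂ :=
  Matrix.diagonal (fun i => A i i)

/-- The diagonal anti-blocker of a set of positive semidefinite diagonal matrices. -/
def diagAntiBlocker {d : ℕ} (A : Set (Matrix (Fin d) (Fin d) ℂ)) :
    Set (Matrix (Fin d) (Fin d) ℂ) :=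
  {B | B.PosSemidef ∧ IsDiag' B ∧ ∀ M ∈ A, (M * B).trace.re ≤ 1}

/-- A diagonal convex corner: a nonempty closed convex subset of the diagonal positive cone,
hereditary within the diagonal matrices. -/
structure IsDiagConvexCorner {d : ℕ} (A : Set (Matrix (Fin d) (Fin d) ℂ)) : Prop where
  nonempty : A.Nonempty
  subset_psd : ∀ M ∈ A, M.PosSemidef
  subset_diag : ∀ M ∈ A, IsDiag' M
  isClosed : IsClosed A
  convex : Convex ℝ A
  hereditary : ∀ M ∈ A, ∀ B : Matrix (Fin d) (Fin d) ℂ,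
    B.PosSemidef → IsDiag' B → (M - B).PosSemidef → B ∈ A

lemma trace_mul_diag_right {d : ℕ} (M N : Matrix (Fin d) (Fin d) ℂ) (hN : IsDiag' N) :
    (M * N).trace = ∑ i, M i i * N i i := by
  simp only [Matrix.trace, Matrix.diag, Matrix.mul_apply]
  refine Finset.sum_congr rfl fun i _ => ?_
  refine Finset.sum_eq_single i (fun j _ hj => ?_) (by simp)
  rw [hN j i hj, mul_zero]

lemma trace_mul_diag_left {d : ℕ} (M N : Matrix (Fin d) (Fin d) ℂ) (hM : IsDiag' M) :
    (M * N).trace = ∑ i, M i i * N i i := by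
  simp only [Matrix.trace, Matrix.diag, Matrix.mul_apply]
  refine Finset.sum_congr rfl fun i _ => ?_
  refine Finset.sum_eq_single i (fun j _ hj => ?_) (by simp)
  rw [hM i j (Ne.symm hj), zero_mul]

lemma diag_nonneg' {d : ℕ} {C : Matrix (Fin d) (Fin d) ℂ} (hC : C.PosSemidef) (i : Fin d) :
    0 ≤ C i i := by
  have := hC.dotProduct_mulVec_nonneg (Pi.single i 1)
  simpa [dotProduct, mulVec, Pi.single_apply, Finset.sum_ite_eq] using this

lemma diagExp_posSemidef {d : ℕ} {C : Matrix (Fin d) (Fin d) ℂ} (hC : C.PosSemidef) :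
    (diagExp C).PosSemidef :=
  Matrix.posSemidef_diagonal_iff.mpr (diag_nonneg' hC)

lemma diagExp_isDiag {d : ℕ} (C : Matrix (Fin d) (Fin d) ℂ) : IsDiag' (diagExp C) :=
  fun i j h => Matrix.diagonal_apply_ne _ h

lemma eq_diagExp_of_isDiag {d : ℕ} {C : Matrix (Fin d) (Fin d) ℂ} (hC : IsDiag' C) :
    diagExp C = C := by
  ext i j
  rcases eq_or_ne i j with rfl | h
  · simp [diagExp]
  · rw [hC i j h, diagExp, Matrix.diagonal_apply_ne _ h]

/-- If `A` is a diagonal convex corner and `B` a convex corner with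
`A = D_d ∩ B = Δ(B)`, then `A^♭ = D_d ∩ B^♯ = Δ(B^♯)`. -/
theorem stmt8 (d : ℕ) (A B : Set (Matrix (Fin d) (Fin d) ℂ))
    (hA : IsDiagConvexCorner A) (hB : IsConvexCorner B)
    (hAB₁ : A = {M ∈ B | IsDiag' M})
    (hAB₂ : A = diagExp '' B) :
    diagAntiBlocker A = {M ∈ antiBlocker B | IsDiag' M} ∧
    diagAntiBlocker A = diagExp '' antiBlocker B := by
  have h1 : diagAntiBlocker A = {M ∈ antiBlocker B | IsDiag' M} := by
    ext N
    constructor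
    · rintro ⟨hpsd, hdiag, hle⟩
      refine ⟨⟨hpsd, fun M hM => ?_⟩, hdiag⟩
      have hMA : diagExp M ∈ A := hAB₂ ▸ ⟨M, hM, rfl⟩
      have key : (M * N).trace = (diagExp M * N).trace := by
        rw [trace_mul_diag_right _ _ hdiag, trace_mul_diag_right _ _ hdiag]
        exact Finset.sum_congr rfl fun i _ => by simp [diagExp]
      rw [key]
      exact hle (diagExp M) hMA
    · rintro ⟨⟨hpsd, hle⟩, hdiag⟩
      refine ⟨hpsd, hdiag, fun M hM => hle M ?_⟩
      rw [hAB₁] at hM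
      exact hM.1
  refine ⟨h1, ?_⟩
  ext C
  constructor
  · intro hC
    have hC' := h1 ▸ hC
    exact ⟨C, hC'.1, eq_diagExp_of_isDiag hC'.2⟩
  · rintro ⟨C, ⟨hpsd, hle⟩, rfl⟩
    refine ⟨diagExp_posSemidef hpsd, diagExp_isDiag C, fun M hM => ?_⟩
    have hMB : M ∈ B := by rw [hAB₁] at hM; exact hM.1
    have hMd : IsDiag' M := hA.subset_diag M hM
    have key : (M * diagExp C).trace = (M * C).trace := by
      rw [trace_mul_diag_left _ _ hMd, trace_mul_diag_left _ _ hMd]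
      exact Finset.sum_congr rfl fun i _ => by simp [diagExp]
    rw [key]
    exact hle M hMB
end

section
/- Let {ξ₁,…,ξ_k} and {η₁,…,η_m} be two orthonormal families in a finite-dimensional Hilbert space H such that ξᵢξⱼ* ⊥ η_pη_q* (Hilbert–Schmidt orthogonality) whenever i ≠ j and p ≠ q. Let P = Σᵢ ξᵢξᵢ* and Q = Σ_p η_pη_p*. Then Tr(PQ) ≤ 1. -/
open Matrix BigOperators

lemma trace_vmv {n : ℕ} (a b c d : Fin n → ℂ) :
    (vecMulVec a b * vecMulVec c d).trace = (b ⬝ᵥ c) * (d ⬝ᵥ a) := by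
  simp only [Matrix.trace, Matrix.diag, Matrix.mul_apply, Matrix.vecMulVec_apply, dotProduct,
    Finset.sum_mul, Finset.mul_sum]
  refine Finset.sum_congr rfl fun x _ => Finset.sum_congr rfl fun y _ => by ring

lemma bessel_aux {n a : ℕ} (u : Fin a → (Fin n → ℂ)) (x : Fin n → ℂ)
    (hu : ∀ i j, star (u i) ⬝ᵥ u j = if i = j then 1 else 0)
    (hx : star x ⬝ᵥ x = 1) :
    ∑ i, Complex.normSq (star (u i) ⬝ᵥ x) ≤ 1 := by
  set u' : Fin a → EuclideanSpace ℂ (Fin n) := fun i => (WithLp.equiv 2 (Fin n → ℂ)).symm (u i)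
  set x' : EuclideanSpace ℂ (Fin n) := (WithLp.equiv 2 (Fin n → ℂ)).symm x
  have hinner : ∀ i, (inner ℂ (u' i) x' : ℂ) = star (u i) ⬝ᵥ x := fun i =>
    (EuclideanSpace.inner_toLp_toLp (u i) x).trans (dotProduct_comm _ _)
  have hu' : Orthonormal ℂ u' := by
    rw [orthonormal_iff_ite]
    intro i j
    have : (inner ℂ (u' i) (u' j) : ℂ) = star (u i) ⬝ᵥ u j :=
      (EuclideanSpace.inner_toLp_toLp (u i) (u j)).trans (dotProduct_comm _ _)
    rw [this, hu]
  have hb := hu'.sum_inner_products_le (s := Finset.univ) x'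
  have hxnorm : ‖x'‖ ^ 2 = 1 := by
    have h1 : (inner ℂ x' x' : ℂ) = 1 := by
      rw [show (inner ℂ x' x' : ℂ) = star x ⬝ᵥ x from
        (EuclideanSpace.inner_toLp_toLp x x).trans (dotProduct_comm _ _), hx]
    have := @inner_self_eq_norm_sq ℂ _ _ _ _ x'
    rw [← this]
    rw [h1]; simp
  rw [hxnorm] at hb
  calc ∑ i, Complex.normSq (star (u i) ⬝ᵥ x)
      = ∑ i, ‖(inner ℂ (u' i) x' : ℂ)‖ ^ 2 := by
        refine Finset.sum_congr rfl fun i _ => ?_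
        rw [hinner]
        simp [Complex.normSq_eq_norm_sq]
    _ ≤ 1 := hb

/-- If `{ξ i}` and `{η p}` are orthonormal families with `ξᵢξⱼ* ⊥ η_pη_q*`
(Hilbert–Schmidt) whenever `i ≠ j` and `p ≠ q`, then `Tr(PQ) ≤ 1` for the corresponding
projections `P = ∑ ξᵢξᵢ*` and `Q = ∑ η_pη_p*`. -/
theorem stmt9 (n k m : ℕ)
    (ξ : Fin k → (Fin n → ℂ)) (η : Fin m → (Fin n → ℂ))
    (hξ : ∀ i j, star (ξ i) ⬝ᵥ ξ j = if i = j then 1 else 0)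
    (hη : ∀ p q, star (η p) ⬝ᵥ η q = if p = q then 1 else 0)
    (horth : ∀ i j p q, i ≠ j → p ≠ q →
      ((vecMulVec (η p) (star (η q)))ᴴ * vecMulVec (ξ i) (star (ξ j))).trace = 0) :
    (((∑ i, vecMulVec (ξ i) (star (ξ i))) *
      (∑ p, vecMulVec (η p) (star (η p)))).trace).re ≤ 1 := by
  classical
  set c : Fin k → Fin m → ℂ := fun i p => star (ξ i) ⬝ᵥ η p with hcdef
  have hconj : ∀ i p, star (η p) ⬝ᵥ ξ i = (starRingEnd ℂ) (c i p) := by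
    intro i p
    simp only [hcdef, dotProduct, map_sum, _root_.map_mul, Complex.conj_conj,
      Pi.star_apply, RCLike.star_def]
    exact Finset.sum_congr rfl fun x _ => by ring
  have key : ((∑ i, vecMulVec (ξ i) (star (ξ i))) *
      (∑ p, vecMulVec (η p) (star (η p)))).trace
      = ∑ i, ∑ p, (Complex.normSq (c i p) : ℂ) := by
    rw [Finset.sum_mul]
    simp only [Finset.mul_sum, Matrix.trace_sum]
    refine Finset.sum_congr rfl fun i _ => Finset.sum_congr rfl fun p _ => ?_
    rw [trace_vmv, hconj]
    exact Complex.mul_conj (c i p)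
  have horth' : ∀ i j p q, i ≠ j → p ≠ q → c i p = 0 ∨ c j q = 0 := by
    intro i j p q hij hpq
    have h := horth i j p q hij hpq
    have hH : (vecMulVec (η p) (star (η q)))ᴴ = vecMulVec (η q) (star (η p)) := by
      ext x y
      simp [conjTranspose_apply, vecMulVec_apply, mul_comm]
    rw [hH, trace_vmv, hconj] at h
    rcases mul_eq_zero.mp h with h' | h'
    · exact Or.inl ((map_eq_zero _).mp h')
    · exact Or.inr h'
  rw [key]
  have hre : (∑ i, ∑ p, (Complex.normSq (c i p) : ℂ)).re
      = ∑ i, ∑ p, Complex.normSq (c i p) := by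
    norm_cast
  rw [hre]
  by_cases hz : ∀ i p, c i p = 0
  · simp [hz]
  · push_neg at hz
    obtain ⟨i₀, p₀, h₀⟩ := hz
    by_cases hrow : ∀ q, q ≠ p₀ → c i₀ q = 0
    · -- support in column p₀
      have hcol0 : ∀ i p, p ≠ p₀ → c i p = 0 := by
        intro i p hp
        by_cases hi : i = i₀
        · exact hi ▸ hrow p hp
        · rcases horth' i₀ i p₀ p (fun h => hi h.symm) (fun h => hp h.symm) with h | h
          · exact absurd h h₀
          · exact h
      have hsum : ∑ i, ∑ p, Complex.normSq (c i p) = ∑ i, Complex.normSq (c i p₀) := by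
        refine Finset.sum_congr rfl fun i _ => ?_
        rw [Finset.sum_eq_single p₀]
        · intro q _ hq
          rw [hcol0 i q hq]
          simp
        · intro h
          exact absurd (Finset.mem_univ p₀) h
      rw [hsum]
      exact bessel_aux ξ (η p₀) hξ (by rw [hη]; simp)
    · push_neg at hrow
      obtain ⟨q₁, hq₁ne, hq₁⟩ := hrow
      have hrow0 : ∀ i, i ≠ i₀ → ∀ p, c i p = 0 := by
        intro i hi p
        by_cases hp : p = p₀
        · rcases horth' i₀ i q₁ p (fun h => hi h.symm) (fun h => hq₁ne (h.trans hp)) with h | h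
          · exact absurd h hq₁
          · exact h
        · rcases horth' i₀ i p₀ p (fun h => hi h.symm) (fun h => hp h.symm) with h | h
          · exact absurd h h₀
          · exact h
      have hsum : ∑ i, ∑ p, Complex.normSq (c i p) = ∑ p, Complex.normSq (c i₀ p) := by
        rw [Finset.sum_eq_single i₀]
        · intro j _ hj
          refine Finset.sum_eq_zero fun p _ => ?_
          rw [hrow0 j hj p]
          simp
        · intro h
          exact absurd (Finset.mem_univ i₀) h
      rw [hsum]
      have hb := bessel_aux η (ξ i₀) hη (by rw [hξ]; simp)
      calc ∑ p, Complex.normSq (c i₀ p)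
          = ∑ p, Complex.normSq (star (η p) ⬝ᵥ ξ i₀) := by
            refine Finset.sum_congr rfl fun p _ => ?_
            rw [hconj, Complex.normSq_conj]
        _ ≤ 1 := hb
end

section
/- Let u, v ∈ ℂⁿ with u a unit vector, v orthogonal to u, and suppose both uu* and uv* lie in S_n = span{I_n, e_ie_j* : i ≠ j} ⊆ M_n. Then |uᵢ|² = 1/n for all i, and v = 0. -/
open Matrix BigOperators

/-- The operator system `S_n = span{I_n, e_ie_j* : i ≠ j} ⊆ M_n`. -/
noncomputable def Sn (n : ℕ) : Submodule ℂ (Matrix (Fin n) (Fin n) ℂ) :=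
  Submodule.span ℂ ({1} ∪ {M | ∃ i j : Fin n, i ≠ j ∧ M = Matrix.single i j 1})

/-- Matrices with constant diagonal form a submodule. -/
noncomputable def constDiag (n : ℕ) : Submodule ℂ (Matrix (Fin n) (Fin n) ℂ) where
  carrier := {A | ∀ i j, A i i = A j j}
  add_mem' := by intro a b ha hb i j; simp [Matrix.add_apply, ha i j, hb i j]
  zero_mem' := by intro i j; simp
  smul_mem' := by intro c a ha i j; simp [Matrix.smul_apply, ha i j]

lemma Sn_le_constDiag (n : ℕ) : Sn n ≤ constDiag n := by
  rw [Sn, Submodule.span_le]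
  rintro M (rfl | ⟨i, j, hij, rfl⟩)
  · intro a b; simp
  · intro a b
    simp only [Matrix.single, Matrix.of_apply]
    rw [if_neg (fun h => hij (h.1.trans h.2.symm)),
       if_neg (fun h => hij (h.1.trans h.2.symm))]

/-- If `u` is a unit vector, `v ⊥ u`, and both `uu*` and `uv*` lie in `S_n`,
then `|uᵢ|² = 1/n` for all `i` and `v = 0`. -/
theorem stmt11 (n : ℕ) (u v : Fin n → ℂ)
    (hu : star u ⬝ᵥ u = 1)
    (huv : star u ⬝ᵥ v = 0)
    (h1 : vecMulVec u (star u) ∈ Sn n)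
    (h2 : vecMulVec u (star v) ∈ Sn n) :
    (∀ i, ‖u i‖ ^ 2 = 1 / (n : ℝ)) ∧ v = 0 := by
  have hn : 0 < n := by
    by_contra h
    have : n = 0 := by omega
    subst this
    simp [dotProduct] at hu
  have d1 := Sn_le_constDiag n h1
  have d2 := Sn_le_constDiag n h2
  have d1 : ∀ i j, vecMulVec u (star u) i i = vecMulVec u (star u) j j := d1
  have d2 : ∀ i j, vecMulVec u (star v) i i = vecMulVec u (star v) j j := d2
  simp only [vecMulVec_apply, Pi.star_apply] at d1 d2
  -- sum of diagonal of uu* is 1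
  have hsum1 : ∑ i, u i * star (u i) = 1 := by
    rw [← hu]; simp [dotProduct, mul_comm]
  have hsum2 : ∑ i, u i * star (v i) = 0 := by
    have := congrArg star huv
    simpa [dotProduct, star_sum, mul_comm] using this
  have key1 : ∀ i, u i * star (u i) = 1 / n := by
    intro i
    have : ∑ j, u j * star (u j) = ∑ j : Fin n, u i * star (u i) := by
      exact Finset.sum_congr rfl fun j _ => (d1 j i)
    rw [hsum1, Finset.sum_const, Finset.card_univ, Fintype.card_fin] at this
    have hne : (n : ℂ) ≠ 0 := Nat.cast_ne_zero.mpr hn.ne'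
    field_simp at this ⊢
    linear_combination -this
  have key2 : ∀ i, u i * star (v i) = 0 := by
    intro i
    have : ∑ j, u j * star (v j) = ∑ j : Fin n, u i * star (v i) := by
      exact Finset.sum_congr rfl fun j _ => (d2 j i)
    rw [hsum2, Finset.sum_const, Finset.card_univ, Fintype.card_fin,
      nsmul_eq_mul] at this
    have hne : (n : ℂ) ≠ 0 := Nat.cast_ne_zero.mpr hn.ne'
    exact (mul_eq_zero.mp this.symm).resolve_left hne
  constructor
  · intro i
    have h := key1 i
    have h' : (Complex.normSq (u i) : ℂ) = 1 / n := by
      rw [← Complex.mul_conj]; exact h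
    have hre := congrArg Complex.re h'
    have hc : ((1 / n : ℝ) : ℂ) = 1 / (n : ℂ) := by push_cast; ring
    rw [← hc, Complex.ofReal_re, Complex.ofReal_re] at hre
    rw [← Complex.normSq_eq_norm_sq, hre]
  · funext i
    have hu0 : u i ≠ 0 := by
      intro h
      have := key1 i
      rw [h, zero_mul] at this
      have hne : (n : ℂ) ≠ 0 := Nat.cast_ne_zero.mpr hn.ne'
      field_simp at this
      simp at this
    have := key2 i
    rcases mul_eq_zero.mp this with h | h
    · exact absurd h hu0
    · simpa using h
end

section
/- Let G = (X,E) be a finite graph. Suppose (P_x)_{x∈X} and (Q_x)_{x∈X} are families of orthogonal projections on finite-dimensional Hilbert spaces K₁, K₂ respectively, such that P_xP_y = 0 whenever x,y are distinct non-adjacent vertices, and Q_xQ_y = 0 whenever x,y are distinct adjacent vertices. Then for any states ρ on K₁ and σ on K₂, Σ_{x∈X} Tr(P_xρ)·Tr(Q_xσ) ≤ 1. -/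
open Matrix BigOperators
open scoped ComplexOrder Kronecker

lemma psd_eq_conjTranspose_mul_self {n : Type*} [Fintype n] {A : Matrix n n ℂ}
    (hA : A.PosSemidef) : ∃ B : Matrix n n ℂ, A = Bᴴ * B := by
  classical
  open scoped MatrixOrder in
  exact CStarAlgebra.nonneg_iff_eq_star_mul_self.mp hA.nonneg

lemma trace_psd_nonneg {n : Type*} [Fintype n] {A : Matrix n n ℂ} (hA : A.PosSemidef) :
    0 ≤ A.trace := by
  classical
  obtain ⟨B, rfl⟩ := psd_eq_conjTranspose_mul_self hA
  rw [Matrix.trace]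
  refine Finset.sum_nonneg fun i _ => ?_
  simp only [Matrix.diag_apply, Matrix.mul_apply, Matrix.conjTranspose_apply]
  exact Finset.sum_nonneg fun j _ => star_mul_self_nonneg _

lemma trace_mul_psd_nonneg {n : Type*} [Fintype n] {A B : Matrix n n ℂ}
    (hA : A.PosSemidef) (hB : B.PosSemidef) : 0 ≤ (A * B).trace := by
  classical
  obtain ⟨C, rfl⟩ := psd_eq_conjTranspose_mul_self hB
  rw [← Matrix.mul_assoc, Matrix.trace_mul_cycle]
  exact trace_psd_nonneg (hA.mul_mul_conjTranspose_same C)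

lemma kron_conjTranspose {m n : Type*} (A : Matrix m m ℂ) (B : Matrix n n ℂ) :
    (A ⊗ₖ B)ᴴ = Aᴴ ⊗ₖ Bᴴ := by
  ext ⟨i, j⟩ ⟨k, l⟩
  simp [Matrix.conjTranspose_apply, Matrix.kroneckerMap_apply]

lemma proj_psd {n : Type*} [Fintype n] {A : Matrix n n ℂ}
    (h1 : Aᴴ = A) (h2 : A * A = A) : A.PosSemidef := by
  have := Matrix.posSemidef_conjTranspose_mul_self A
  rwa [h1, h2] at this

/-- Given projective orthogonal labellings `(P_x)` of `G` and `(Q_x)` of `G^c`,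
and states `ρ`, `σ`, we have `∑_x Tr(P_x ρ)·Tr(Q_x σ) ≤ 1`. -/
theorem stmt13 (X : Type) [Fintype X] (G : SimpleGraph X) (k₁ k₂ : ℕ)
    (P : X → Matrix (Fin k₁) (Fin k₁) ℂ) (Q : X → Matrix (Fin k₂) (Fin k₂) ℂ)
    (hPproj : ∀ x, (P x)ᴴ = P x ∧ P x * P x = P x)
    (hQproj : ∀ x, (Q x)ᴴ = Q x ∧ Q x * Q x = Q x)
    (hP : ∀ x y, x ≠ y → ¬ G.Adj x y → P x * P y = 0)
    (hQ : ∀ x y, x ≠ y → G.Adj x y → Q x * Q y = 0)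
    (ρ : Matrix (Fin k₁) (Fin k₁) ℂ) (σ : Matrix (Fin k₂) (Fin k₂) ℂ)
    (hρ : ρ.PosSemidef ∧ ρ.trace = 1) (hσ : σ.PosSemidef ∧ σ.trace = 1) :
    ∑ x : X, ((P x * ρ).trace.re * (Q x * σ).trace.re) ≤ 1 := by
  classical
  obtain ⟨hρpsd, hρtr⟩ := hρ
  obtain ⟨hσpsd, hσtr⟩ := hσ
  set R : X → Matrix (Fin k₁ × Fin k₂) (Fin k₁ × Fin k₂) ℂ := fun x => P x ⊗ₖ Q x with hR
  have hRorth : ∀ x y, x ≠ y → R x * R y = 0 := by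
    intro x y hxy
    simp only [hR, ← Matrix.mul_kronecker_mul]
    by_cases hadj : G.Adj x y
    · rw [hQ x y hxy hadj, Matrix.kronecker_zero]
    · rw [hP x y hxy hadj, Matrix.zero_kronecker]
  have hRidem : ∀ x, R x * R x = R x := by
    intro x
    simp only [hR, ← Matrix.mul_kronecker_mul, (hPproj x).2, (hQproj x).2]
  have hRherm : ∀ x, (R x)ᴴ = R x := by
    intro x
    simp only [hR, kron_conjTranspose, (hPproj x).1, (hQproj x).1]
  set S : Matrix (Fin k₁ × Fin k₂) (Fin k₁ × Fin k₂) ℂ := ∑ x, R x with hS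
  have hSherm : Sᴴ = S := by
    simp only [hS, Matrix.conjTranspose_sum]
    exact Finset.sum_congr rfl fun x _ => hRherm x
  have hSidem : S * S = S := by
    simp only [hS, Finset.sum_mul, Finset.mul_sum]
    rw [Finset.sum_congr rfl fun x (_ : x ∈ Finset.univ) =>
      (Finset.sum_eq_single x (fun y _ hy => hRorth y x hy) (by simp)).trans (hRidem x)]
  have hcompl : Matrix.PosSemidef (1 - S) := by
    have h1 : (1 - S)ᴴ = 1 - S := by
      rw [Matrix.conjTranspose_sub, hSherm, Matrix.conjTranspose_one]
    have h2 : (1 - S) * (1 - S) = 1 - S := by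
      rw [Matrix.sub_mul, Matrix.mul_sub, Matrix.mul_sub, one_mul, mul_one, hSidem]
      simp
    exact proj_psd h1 h2
  have hτpsd : (ρ ⊗ₖ σ).PosSemidef := by
    obtain ⟨A, rfl⟩ := psd_eq_conjTranspose_mul_self hρpsd
    obtain ⟨B, rfl⟩ := psd_eq_conjTranspose_mul_self hσpsd
    rw [Matrix.mul_kronecker_mul, ← kron_conjTranspose]
    exact Matrix.posSemidef_conjTranspose_mul_self _
  have hτtr : (ρ ⊗ₖ σ).trace = 1 := by
    rw [Matrix.trace_kronecker, hρtr, hσtr, mul_one]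
  -- trace of S * τ ≤ 1 in ℂ order
  have key : (S * (ρ ⊗ₖ σ)).trace ≤ 1 := by
    have h0 : 0 ≤ ((1 - S) * (ρ ⊗ₖ σ)).trace := trace_mul_psd_nonneg hcompl hτpsd
    rw [Matrix.sub_mul, one_mul, Matrix.trace_sub, hτtr] at h0
    exact sub_nonneg.mp h0
  have hPpsd : ∀ x, (P x).PosSemidef := fun x => proj_psd (hPproj x).1 (hPproj x).2
  have hQpsd : ∀ x, (Q x).PosSemidef := fun x => proj_psd (hQproj x).1 (hQproj x).2
  have ha : ∀ x, 0 ≤ (P x * ρ).trace := fun x => trace_mul_psd_nonneg (hPpsd x) hρpsd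
  have hb : ∀ x, 0 ≤ (Q x * σ).trace := fun x => trace_mul_psd_nonneg (hQpsd x) hσpsd
  have hsum : ∑ x : X, ((P x * ρ).trace.re * (Q x * σ).trace.re)
      = (S * (ρ ⊗ₖ σ)).trace.re := by
    have him : ∀ x : X, ((P x * ρ).trace * (Q x * σ).trace).re
        = (P x * ρ).trace.re * (Q x * σ).trace.re := by
      intro x
      have h1 : (P x * ρ).trace.im = 0 := ((Complex.le_def.mp (ha x)).2).symm
      have h2 : (Q x * σ).trace.im = 0 := ((Complex.le_def.mp (hb x)).2).symm
      rw [Complex.mul_re, h1, h2]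
      ring
    have : (S * (ρ ⊗ₖ σ)).trace = ∑ x : X, (P x * ρ).trace * (Q x * σ).trace := by
      rw [hS, Finset.sum_mul, Matrix.trace_sum]
      refine Finset.sum_congr rfl fun x _ => ?_
      rw [hR, ← Matrix.mul_kronecker_mul, Matrix.trace_kronecker]
    rw [this, Complex.re_sum]
    exact Finset.sum_congr rfl fun x _ => (him x).symm
  rw [hsum]
  have := (Complex.le_def.mp key).1
  simpa using this
end

section
/- Let S ⊆ L(H) be an operator system on a finite-dimensional Hilbert space and let Φ be a quantum channel (completely positive trace-preserving map) from L(H) to some M_k with Kraus operators A₁,…,A_m satisfying A_p*A_q ∈ S for all p,q. If {ξ₁,…,ξ_k} is an S-independent orthonormal set (ξᵢξⱼ* ⊥ S for i ≠ j), then Tr(Φ(ξᵢξᵢ*)Φ(ξⱼξⱼ*)) = 0 for all i ≠ j, and consequently ‖Φ(P)‖ ≤ 1 where P = Σᵢ ξᵢξᵢ*. -/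
open Matrix BigOperators
open scoped ComplexOrder Matrix.Norms.L2Operator

private lemma stmt14_conj_outer {d k : ℕ} (A : Matrix (Fin k) (Fin d) ℂ) (x : Fin d → ℂ) :
    A * vecMulVec x (star x) * Aᴴ = vecMulVec (A *ᵥ x) (star (A *ᵥ x)) := by
  ext i j
  simp [mul_apply, vecMulVec_apply, mulVec, dotProduct, conjTranspose_apply,
    Finset.mul_sum, Finset.sum_mul, map_sum]
  congr 1; ext a; congr 1; ext b; ring

private lemma stmt14_outer_mul {n : ℕ} (u v w : Fin n → ℂ) :
    vecMulVec u (star u) * vecMulVec v w = (star u ⬝ᵥ v) • vecMulVec u w := by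
  ext i j
  simp [mul_apply, vecMulVec_apply, dotProduct, Finset.sum_mul, Finset.mul_sum]
  congr 1; ext a; ring

private lemma stmt14_traceform {d : ℕ} (T : Matrix (Fin d) (Fin d) ℂ) (x y : Fin d → ℂ) :
    (Tᴴ * vecMulVec x (star y)).trace = star (star x ⬝ᵥ (T *ᵥ y)) := by
  simp [trace, diag, mul_apply, vecMulVec_apply, conjTranspose_apply, dotProduct,
    mulVec, Finset.mul_sum, map_sum]
  rw [Finset.sum_comm]
  congr 1; ext a; congr 1; ext b; ring

private lemma stmt14_outer_herm {n : ℕ} (v : Fin n → ℂ) :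
    star (vecMulVec v (star v)) = vecMulVec v (star v) := by
  ext i j; simp [vecMulVec_apply, conjTranspose_apply, mul_comm]

private lemma stmt14_norm_outer {n : ℕ} (v : Fin n → ℂ) :
    ‖vecMulVec v (star v)‖ ≤ ‖star v ⬝ᵥ v‖ := by
  set M := vecMulVec v (star v) with hM
  have hsq : M * M = (star v ⬝ᵥ v) • M := stmt14_outer_mul v v (star v)
  have h1 : ‖M‖ * ‖M‖ = ‖star v ⬝ᵥ v‖ * ‖M‖ := by
    rw [← CStarRing.norm_star_mul_self (x := M), stmt14_outer_herm, hsq, norm_smul]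
  rcases eq_or_ne ‖M‖ 0 with h0 | h0
  · rw [h0]; positivity
  · exact le_of_eq (mul_right_cancel₀ h0 h1)

private lemma stmt14_norm_nonneg_re (c : ℂ) (h : 0 ≤ c) : ‖c‖ = c.re := by
  rw [Complex.nonneg_iff] at h
  rw [Complex.norm_def, Complex.normSq_apply, ← h.2]
  simp [Real.sqrt_mul_self h.1, abs_of_nonneg h.1]

private lemma stmt14_sum_mulVec {k d m : ℕ} (M : Fin m → Matrix (Fin k) (Fin d) ℂ)
    (x : Fin d → ℂ) : (∑ p, M p) *ᵥ x = ∑ p, M p *ᵥ x := by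
  ext j
  simp [mulVec, dotProduct, Matrix.sum_apply, Finset.sum_mul]
  rw [Finset.sum_comm]

private lemma stmt14_dot_sum {n m : ℕ} (x : Fin n → ℂ) (w : Fin m → (Fin n → ℂ)) :
    x ⬝ᵥ (∑ p, w p) = ∑ p, x ⬝ᵥ w p := by
  simp [dotProduct, Finset.sum_apply, Finset.mul_sum]
  rw [Finset.sum_comm]

/-- If `Φ` is a quantum channel with Kraus operators `A_p` satisfying
`A_p* A_q ∈ S`, and `{ξ i}` is an `S`-independent orthonormal family, then
`Tr(Φ(ξᵢξᵢ*)Φ(ξⱼξⱼ*)) = 0` for `i ≠ j`, and `‖Φ(P)‖ ≤ 1` for `P = ∑ ξᵢξᵢ*`. -/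
theorem stmt14 (d k m r : ℕ) (S : Submodule ℂ (Matrix (Fin d) (Fin d) ℂ))
    (hI : (1 : Matrix (Fin d) (Fin d) ℂ) ∈ S)
    (hstar : ∀ A ∈ S, Aᴴ ∈ S)
    (A : Fin m → Matrix (Fin k) (Fin d) ℂ)
    (hch : ∑ p, (A p)ᴴ * A p = 1)
    (hS : ∀ p q, (A p)ᴴ * A q ∈ S)
    (ξ : Fin r → (Fin d → ℂ))
    (horth : ∀ i j, star (ξ i) ⬝ᵥ ξ j = if i = j then 1 else 0)
    (hind : ∀ i j, i ≠ j → ∀ T ∈ S, (Tᴴ * vecMulVec (ξ i) (star (ξ j))).trace = 0) :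
    (∀ i j, i ≠ j →
      ((∑ p, A p * vecMulVec (ξ i) (star (ξ i)) * (A p)ᴴ) *
       (∑ p, A p * vecMulVec (ξ j) (star (ξ j)) * (A p)ᴴ)).trace = 0) ∧
    ‖∑ p, A p * (∑ i, vecMulVec (ξ i) (star (ξ i))) * (A p)ᴴ‖ ≤ 1 := by
  -- the images of the rank-one projections
  set C : Fin r → Matrix (Fin k) (Fin k) ℂ :=
    fun i => ∑ p, vecMulVec (A p *ᵥ ξ i) (star (A p *ᵥ ξ i)) with hCdef
  have hC : ∀ i, (∑ p, A p * vecMulVec (ξ i) (star (ξ i)) * (A p)ᴴ) = C i := by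
    intro i
    exact Finset.sum_congr rfl fun p _ => stmt14_conj_outer (A p) (ξ i)
  -- reduction of dot products
  have hdot : ∀ p q (x y : Fin d → ℂ),
      star (A p *ᵥ x) ⬝ᵥ (A q *ᵥ y) = star x ⬝ᵥ (((A p)ᴴ * A q) *ᵥ y) := by
    intro p q x y
    simp [star_mulVec, dotProduct_mulVec, vecMul_vecMul]
  -- the key orthogonality of image vectors
  have hkey : ∀ i j, i ≠ j → ∀ p q, star (A p *ᵥ ξ i) ⬝ᵥ (A q *ᵥ ξ j) = 0 := by
    intro i j hij p q
    have h := hind i j hij ((A p)ᴴ * A q) (hS p q)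
    rw [stmt14_traceform] at h
    rw [hdot]
    simpa using congrArg star h
  -- products of distinct C's vanish
  have hCC : ∀ i j, i ≠ j → C i * C j = 0 := by
    intro i j hij
    rw [hCdef]
    rw [Finset.sum_mul_sum]
    apply Finset.sum_eq_zero; intro p _
    apply Finset.sum_eq_zero; intro q _
    rw [stmt14_outer_mul, hkey i j hij p q, zero_smul]
  constructor
  · intro i j hij
    rw [hC i, hC j, hCC i j hij, trace_zero]
  -- now the norm bound
  set B : Matrix (Fin k) (Fin k) ℂ := ∑ i, C i with hBdef
  have hgoal : (∑ p, A p * (∑ i, vecMulVec (ξ i) (star (ξ i))) * (A p)ᴴ) = B := by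
    calc ∑ p, A p * (∑ i, vecMulVec (ξ i) (star (ξ i))) * (A p)ᴴ
        = ∑ p, ∑ i, A p * vecMulVec (ξ i) (star (ξ i)) * (A p)ᴴ := by
          refine Finset.sum_congr rfl fun p _ => ?_
          rw [Matrix.mul_sum, Matrix.sum_mul]
      _ = ∑ i, ∑ p, A p * vecMulVec (ξ i) (star (ξ i)) * (A p)ᴴ := Finset.sum_comm
      _ = B := Finset.sum_congr rfl fun i _ => hC i
  rw [hgoal]
  -- norms of the C i are at most 1
  have hCherm : ∀ i, star (C i) = C i := by
    intro i
    rw [hCdef]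
    simp only [star_sum]
    exact Finset.sum_congr rfl fun p _ => stmt14_outer_herm _
  have htr : ∀ i, ∑ p, star (A p *ᵥ ξ i) ⬝ᵥ (A p *ᵥ ξ i) = 1 := by
    intro i
    have h1 : ∑ p, star (A p *ᵥ ξ i) ⬝ᵥ (A p *ᵥ ξ i)
        = star (ξ i) ⬝ᵥ ((∑ p, (A p)ᴴ * A p) *ᵥ ξ i) := by
      rw [stmt14_sum_mulVec, stmt14_dot_sum]
      exact Finset.sum_congr rfl fun p _ => (hdot p p _ _)
    rw [h1, hch, one_mulVec, horth i i]
    simp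
  have hCnorm : ∀ i, ‖C i‖ ≤ 1 := by
    intro i
    calc ‖C i‖ ≤ ∑ p, ‖vecMulVec (A p *ᵥ ξ i) (star (A p *ᵥ ξ i))‖ := by
          rw [hCdef]; exact norm_sum_le _ _
      _ ≤ ∑ p, ‖star (A p *ᵥ ξ i) ⬝ᵥ (A p *ᵥ ξ i)‖ :=
          Finset.sum_le_sum fun p _ => stmt14_norm_outer _
      _ = ∑ p, (star (A p *ᵥ ξ i) ⬝ᵥ (A p *ᵥ ξ i)).re :=
          Finset.sum_congr rfl fun p _ =>
            stmt14_norm_nonneg_re _ (dotProduct_star_self_nonneg _)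
      _ = (∑ p, star (A p *ᵥ ξ i) ⬝ᵥ (A p *ᵥ ξ i)).re := by
          rw [Complex.re_sum]
      _ = 1 := by rw [htr i]; simp
  -- B is hermitian
  have hBherm : star B = B := by
    rw [hBdef, star_sum]
    exact Finset.sum_congr rfl fun i _ => hCherm i
  -- powers of B decompose
  have hpow : ∀ n : ℕ, B ^ (n + 1) = ∑ i, (C i) ^ (n + 1) := by
    intro n
    induction n with
    | zero => simp [hBdef]
    | succ n ih =>
      rw [pow_succ, ih, hBdef, Finset.sum_mul_sum]
      refine Finset.sum_congr rfl fun i _ => ?_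
      rw [Finset.sum_eq_single i]
      · rw [← pow_succ]
      · intro j _ hji
        rw [pow_succ, mul_assoc, hCC i j (Ne.symm hji), mul_zero]
      · intro h; exact absurd (Finset.mem_univ i) h
  -- C* identity for hermitian powers
  have hselfnorm : ∀ (X : Matrix (Fin k) (Fin k) ℂ), star X = X → ‖X * X‖ = ‖X‖ * ‖X‖ := by
    intro X hX
    calc ‖X * X‖ = ‖star X * X‖ := by rw [hX]
      _ = ‖X‖ * ‖X‖ := CStarRing.norm_star_mul_self
  have hnormpow : ∀ n : ℕ, ‖B ^ (2 ^ n)‖ = ‖B‖ ^ (2 ^ n) := by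
    intro n
    induction n with
    | zero => simp
    | succ n ih =>
      have h2 : (2 : ℕ) ^ (n + 1) = 2 ^ n * 2 := by ring
      have hpB : star (B ^ (2 ^ n)) = B ^ (2 ^ n) := by rw [star_pow, hBherm]
      rw [h2, pow_mul, sq, hselfnorm _ hpB, ih, ← sq, ← pow_mul]
  have hboundn : ∀ n : ℕ, ‖B‖ ^ (2 ^ n) ≤ (r : ℝ) := by
    intro n
    obtain ⟨t, ht⟩ : ∃ t, 2 ^ n = t + 1 :=
      ⟨2 ^ n - 1, (Nat.succ_pred_eq_of_pos (Nat.pow_pos (n := n) (by norm_num))).symm⟩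
    rw [← hnormpow n, ht, hpow t]
    calc ‖∑ i, C i ^ (t + 1)‖ ≤ ∑ i, ‖C i ^ (t + 1)‖ := norm_sum_le _ _
      _ ≤ ∑ _i : Fin r, (1 : ℝ) := by
          refine Finset.sum_le_sum fun i _ => ?_
          calc ‖C i ^ (t + 1)‖ ≤ ‖C i‖ ^ (t + 1) := norm_pow_le' _ (Nat.succ_pos t)
            _ ≤ 1 := pow_le_one₀ (norm_nonneg _) (hCnorm i)
      _ = r := by simp
  by_contra hcon
  push_neg at hcon
  obtain ⟨n, hn⟩ := pow_unbounded_of_one_lt (r : ℝ) hcon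
  have hle : ‖B‖ ^ n ≤ ‖B‖ ^ (2 ^ n) :=
    pow_le_pow_right₀ hcon.le (Nat.le_of_lt (Nat.lt_two_pow_self (n := n)))
  linarith [hboundn n]
end

section
/- Define, for an operator system S ⊆ M_d, θ̂(S) = inf{‖(Φ*(σ))⁻¹‖ : σ ≥ 0, Tr σ ≤ 1, Φ a quantum channel M_d → M_k for some k with S_Φ ⊆ S and Φ*(σ) invertible}. Then θ̂ is submultiplicative for tensor products: θ̂(S₁ ⊗ S₂) ≤ θ̂(S₁)·θ̂(S₂) for operator systems S₁ ⊆ M_{d₁}, S₂ ⊆ M_{d₂}. -/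
open Matrix BigOperators Kronecker
open scoped ComplexOrder Matrix.Norms.L2Operator

/-- The parameter `θ̂(S)`: the infimum of `‖(Φ*(σ))⁻¹‖` over quantum channels `Φ` with
`S_Φ ⊆ S` and subnormalized positive `σ` with `Φ*(σ)` invertible. -/
noncomputable def thetaHat {n : Type} [Fintype n] [DecidableEq n]
    (S : Submodule ℂ (Matrix n n ℂ)) : ℝ :=
  sInf {r : ℝ | ∃ (k m : ℕ) (A : Fin m → Matrix (Fin k) n ℂ)
      (σ : Matrix (Fin k) (Fin k) ℂ),
    (∑ i, (A i)ᴴ * A i = 1) ∧ (∀ i j, (A i)ᴴ * A j ∈ S) ∧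
    σ.PosSemidef ∧ σ.trace.re ≤ 1 ∧
    IsUnit (∑ i, (A i)ᴴ * σ * A i) ∧
    r = ‖(∑ i, (A i)ᴴ * σ * A i)⁻¹‖}

/-- The tensor product `S₁ ⊗ S₂` of two subspaces of matrices, realised inside
`M_{d₁d₂}` via the Kronecker product. -/
noncomputable def tensorSystem {n₁ n₂ : Type} [Fintype n₁] [Fintype n₂]
    (S₁ : Submodule ℂ (Matrix n₁ n₁ ℂ)) (S₂ : Submodule ℂ (Matrix n₂ n₂ ℂ)) :
    Submodule ℂ (Matrix (n₁ × n₂) (n₁ × n₂) ℂ) :=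
  Submodule.span ℂ {X | ∃ A ∈ S₁, ∃ B ∈ S₂, X = A ⊗ₖ B}

lemma my_conjT_kron {l m n p : Type} (A : Matrix l m ℂ) (B : Matrix n p ℂ) :
    (A ⊗ₖ B)ᴴ = Aᴴ ⊗ₖ Bᴴ := by
  ext ⟨i, j⟩ ⟨a, b⟩
  simp [Matrix.conjTranspose_apply, Matrix.kroneckerMap_apply, star_mul']

lemma my_sum_kron_sum {ι κ l m n p : Type} [Fintype ι] [Fintype κ]
    (f : ι → Matrix l m ℂ) (g : κ → Matrix n p ℂ) :
    (∑ i, f i) ⊗ₖ (∑ j, g j) = ∑ i, ∑ j, (f i) ⊗ₖ (g j) := by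
  ext ⟨i, j⟩ ⟨a, b⟩
  simp [Matrix.kroneckerMap_apply, Matrix.sum_apply, Finset.sum_mul_sum]

lemma my_psd_trace {n : Type} [Fintype n] [DecidableEq n] {σ : Matrix n n ℂ}
    (h : σ.PosSemidef) : 0 ≤ σ.trace := by
  rw [Matrix.trace]
  apply Finset.sum_nonneg
  intro i _
  exact h.diag_nonneg

set_option linter.unusedSectionVars false
section NormLemmas
variable {m n p : Type} [Fintype m] [Fintype n] [Fintype p] [DecidableEq n] [DecidableEq p]

lemma my_l2_opNorm_le_bound (A : Matrix m n ℂ) {c : ℝ} (hc : 0 ≤ c)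
    (h : ∀ x : EuclideanSpace ℂ n,
      ‖(WithLp.equiv 2 (m → ℂ)).symm (A *ᵥ (WithLp.equiv 2 (n → ℂ)) x)‖ ≤ c * ‖x‖) :
    ‖A‖ ≤ c := by
  rw [Matrix.l2_opNorm_def]
  exact ContinuousLinearMap.opNorm_le_bound _ hc fun x => h x

lemma my_mulVec_norm_sq (X : Matrix m n ℂ) (u : n → ℂ) :
    ∑ i, ‖(X *ᵥ u) i‖ ^ 2 ≤ ‖X‖ ^ 2 * ∑ a, ‖u a‖ ^ 2 := by
  have h := Matrix.l2_opNorm_mulVec X ((WithLp.equiv 2 (n → ℂ)).symm u)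
  have h1 : ‖(EuclideanSpace.equiv m ℂ).symm (X *ᵥ (WithLp.equiv 2 (n → ℂ)).symm u)‖
      = Real.sqrt (∑ i, ‖(X *ᵥ u) i‖ ^ 2) := by
    rw [EuclideanSpace.norm_eq]
    rfl
  have h2 : ‖((WithLp.equiv 2 (n → ℂ)).symm u)‖ = Real.sqrt (∑ a, ‖u a‖ ^ 2) := by
    rw [EuclideanSpace.norm_eq]
    simp
  rw [h1, h2] at h
  have h3 : Real.sqrt (∑ i, ‖(X *ᵥ u) i‖ ^ 2) ^ 2 ≤ (‖X‖ * Real.sqrt (∑ a, ‖u a‖ ^ 2)) ^ 2 :=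
    pow_le_pow_left₀ (Real.sqrt_nonneg _) h 2
  rw [Real.sq_sqrt (Finset.sum_nonneg fun _ _ => sq_nonneg _)] at h3
  calc ∑ i, ‖(X *ᵥ u) i‖ ^ 2 ≤ (‖X‖ * Real.sqrt (∑ a, ‖u a‖ ^ 2)) ^ 2 := h3
    _ = ‖X‖ ^ 2 * ∑ a, ‖u a‖ ^ 2 := by
        rw [mul_pow, Real.sq_sqrt (Finset.sum_nonneg fun _ _ => sq_nonneg _)]

set_option linter.unusedSectionVars false

lemma kron_one_mulVec (X : Matrix m n ℂ) (w : n × p → ℂ) (i : m) (j : p) :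
    ((X ⊗ₖ (1 : Matrix p p ℂ)) *ᵥ w) (i, j) = (X *ᵥ fun a => w (a, j)) i := by
  simp [Matrix.mulVec, dotProduct, Fintype.sum_prod_type, Matrix.one_apply,
    mul_ite, mul_zero, mul_one, ite_mul, zero_mul, mul_assoc]

lemma one_kron_mulVec (Y : Matrix m p ℂ) (w : n × p → ℂ) (i : n) (j : m) :
    (((1 : Matrix n n ℂ) ⊗ₖ Y) *ᵥ w) (i, j) = (Y *ᵥ fun b => w (i, b)) j := by
  simp [Matrix.mulVec, dotProduct, Fintype.sum_prod_type, Matrix.one_apply,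
    mul_ite, mul_zero, mul_one, ite_mul, zero_mul, one_mul]

lemma norm_kron_one_le (X : Matrix m n ℂ) :
    ‖X ⊗ₖ (1 : Matrix p p ℂ)‖ ≤ ‖X‖ := by
  rw [Matrix.l2_opNorm_def]
  apply ContinuousLinearMap.opNorm_le_bound _ (norm_nonneg X)
  intro x
  set w : n × p → ℂ := (WithLp.equiv 2 (n × p → ℂ)) x with hw
  have hnx : ‖x‖ = Real.sqrt (∑ q : n × p, ‖w q‖ ^ 2) := by
    rw [EuclideanSpace.norm_eq]; rfl
  have hlhs : ‖(Matrix.toEuclideanLin ≪≫ₗ LinearMap.toContinuousLinearMap) (X ⊗ₖ (1 : Matrix p p ℂ)) x‖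
      = Real.sqrt (∑ q : m × p, ‖((X ⊗ₖ (1 : Matrix p p ℂ)) *ᵥ w) q‖ ^ 2) := by
    rw [EuclideanSpace.norm_eq]; rfl
  rw [hlhs, hnx]
  have key : ∑ q : m × p, ‖((X ⊗ₖ (1 : Matrix p p ℂ)) *ᵥ w) q‖ ^ 2
      ≤ ‖X‖ ^ 2 * ∑ q : n × p, ‖w q‖ ^ 2 := by
    calc ∑ q : m × p, ‖((X ⊗ₖ (1 : Matrix p p ℂ)) *ᵥ w) q‖ ^ 2
        = ∑ j : p, ∑ i : m, ‖(X *ᵥ fun a => w (a, j)) i‖ ^ 2 := by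
          rw [Fintype.sum_prod_type, Finset.sum_comm]
          simp only [kron_one_mulVec]
      _ ≤ ∑ j : p, ‖X‖ ^ 2 * ∑ a : n, ‖w (a, j)‖ ^ 2 := by
          exact Finset.sum_le_sum fun j _ => my_mulVec_norm_sq X _
      _ = ‖X‖ ^ 2 * ∑ q : n × p, ‖w q‖ ^ 2 := by
          rw [← Finset.mul_sum, Fintype.sum_prod_type, Finset.sum_comm]
  calc Real.sqrt (∑ q : m × p, ‖((X ⊗ₖ (1 : Matrix p p ℂ)) *ᵥ w) q‖ ^ 2)
      ≤ Real.sqrt (‖X‖ ^ 2 * ∑ q : n × p, ‖w q‖ ^ 2) := Real.sqrt_le_sqrt key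
    _ = ‖X‖ * Real.sqrt (∑ q : n × p, ‖w q‖ ^ 2) := by
        rw [Real.sqrt_mul (sq_nonneg _), Real.sqrt_sq (norm_nonneg _)]

lemma norm_one_kron_le (Y : Matrix m p ℂ) :
    ‖(1 : Matrix n n ℂ) ⊗ₖ Y‖ ≤ ‖Y‖ := by
  rw [Matrix.l2_opNorm_def]
  apply ContinuousLinearMap.opNorm_le_bound _ (norm_nonneg Y)
  intro x
  set w : n × p → ℂ := (WithLp.equiv 2 (n × p → ℂ)) x with hw
  have hnx : ‖x‖ = Real.sqrt (∑ q : n × p, ‖w q‖ ^ 2) := by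
    rw [EuclideanSpace.norm_eq]; rfl
  have hlhs : ‖(Matrix.toEuclideanLin ≪≫ₗ LinearMap.toContinuousLinearMap) ((1 : Matrix n n ℂ) ⊗ₖ Y) x‖
      = Real.sqrt (∑ q : n × m, ‖(((1 : Matrix n n ℂ) ⊗ₖ Y) *ᵥ w) q‖ ^ 2) := by
    rw [EuclideanSpace.norm_eq]; rfl
  rw [hlhs, hnx]
  have key : ∑ q : n × m, ‖(((1 : Matrix n n ℂ) ⊗ₖ Y) *ᵥ w) q‖ ^ 2
      ≤ ‖Y‖ ^ 2 * ∑ q : n × p, ‖w q‖ ^ 2 := by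
    calc ∑ q : n × m, ‖(((1 : Matrix n n ℂ) ⊗ₖ Y) *ᵥ w) q‖ ^ 2
        = ∑ i : n, ∑ j : m, ‖(Y *ᵥ fun b => w (i, b)) j‖ ^ 2 := by
          rw [Fintype.sum_prod_type]
          simp only [one_kron_mulVec]
      _ ≤ ∑ i : n, ‖Y‖ ^ 2 * ∑ b : p, ‖w (i, b)‖ ^ 2 := by
          exact Finset.sum_le_sum fun i _ => my_mulVec_norm_sq Y _
      _ = ‖Y‖ ^ 2 * ∑ q : n × p, ‖w q‖ ^ 2 := by
          rw [← Finset.mul_sum, Fintype.sum_prod_type]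
  calc Real.sqrt (∑ q : n × m, ‖(((1 : Matrix n n ℂ) ⊗ₖ Y) *ᵥ w) q‖ ^ 2)
      ≤ Real.sqrt (‖Y‖ ^ 2 * ∑ q : n × p, ‖w q‖ ^ 2) := Real.sqrt_le_sqrt key
    _ = ‖Y‖ * Real.sqrt (∑ q : n × p, ‖w q‖ ^ 2) := by
        rw [Real.sqrt_mul (sq_nonneg _), Real.sqrt_sq (norm_nonneg _)]

lemma norm_kron_le {m₁ n₁ m₂ n₂ : Type} [Fintype m₁] [Fintype n₁] [Fintype m₂] [Fintype n₂]
    [DecidableEq m₂] [DecidableEq n₁] [DecidableEq n₂]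
    (X : Matrix m₁ n₁ ℂ) (Y : Matrix m₂ n₂ ℂ) :
    ‖X ⊗ₖ Y‖ ≤ ‖X‖ * ‖Y‖ := by
  have hfac : X ⊗ₖ Y = (X ⊗ₖ (1 : Matrix m₂ m₂ ℂ)) * ((1 : Matrix n₁ n₁ ℂ) ⊗ₖ Y) := by
    rw [← Matrix.mul_kronecker_mul, Matrix.mul_one, Matrix.one_mul]
  calc ‖X ⊗ₖ Y‖ ≤ ‖X ⊗ₖ (1 : Matrix m₂ m₂ ℂ)‖ * ‖(1 : Matrix n₁ n₁ ℂ) ⊗ₖ Y‖ := by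
        rw [hfac]; exact Matrix.l2_opNorm_mul _ _
    _ ≤ ‖X‖ * ‖Y‖ := by
        exact mul_le_mul (norm_kron_one_le X) (norm_one_kron_le Y) (norm_nonneg _) (norm_nonneg _)

end NormLemmas

lemma key_mem (d₁ d₂ k₁ k₂ m₁ m₂ : ℕ)
    (S₁ : Submodule ℂ (Matrix (Fin d₁) (Fin d₁) ℂ))
    (S₂ : Submodule ℂ (Matrix (Fin d₂) (Fin d₂) ℂ))
    (A : Fin m₁ → Matrix (Fin k₁) (Fin d₁) ℂ)
    (B : Fin m₂ → Matrix (Fin k₂) (Fin d₂) ℂ)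
    (σ : Matrix (Fin k₁) (Fin k₁) ℂ) (τ : Matrix (Fin k₂) (Fin k₂) ℂ)
    (hA1 : ∑ i, (A i)ᴴ * A i = 1) (hAS : ∀ i j, (A i)ᴴ * A j ∈ S₁)
    (hσ : σ.PosSemidef) (hσt : σ.trace.re ≤ 1)
    (hu₁ : IsUnit (∑ i, (A i)ᴴ * σ * A i))
    (hB1 : ∑ i, (B i)ᴴ * B i = 1) (hBS : ∀ i j, (B i)ᴴ * B j ∈ S₂)
    (hτ : τ.PosSemidef) (hτt : τ.trace.re ≤ 1)
    (hu₂ : IsUnit (∑ i, (B i)ᴴ * τ * B i)) :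
    ∃ r ∈ {r : ℝ | ∃ (k m : ℕ) (C : Fin m → Matrix (Fin k) (Fin d₁ × Fin d₂) ℂ)
      (ρ : Matrix (Fin k) (Fin k) ℂ),
    (∑ i, (C i)ᴴ * C i = 1) ∧ (∀ i j, (C i)ᴴ * C j ∈ tensorSystem S₁ S₂) ∧
    ρ.PosSemidef ∧ ρ.trace.re ≤ 1 ∧
    IsUnit (∑ i, (C i)ᴴ * ρ * C i) ∧
    r = ‖(∑ i, (C i)ᴴ * ρ * C i)⁻¹‖},
      r ≤ ‖(∑ i, (A i)ᴴ * σ * A i)⁻¹‖ * ‖(∑ i, (B i)ᴴ * τ * B i)⁻¹‖ := by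
  classical
  set M₁ := ∑ i, (A i)ᴴ * σ * A i with hM₁
  set M₂ := ∑ i, (B i)ᴴ * τ * B i with hM₂
  set ek : Fin k₁ × Fin k₂ ≃ Fin (k₁ * k₂) := finProdFinEquiv with hek
  set em : Fin m₁ × Fin m₂ ≃ Fin (m₁ * m₂) := finProdFinEquiv with hem
  set C : Fin (m₁ * m₂) → Matrix (Fin (k₁ * k₂)) (Fin d₁ × Fin d₂) ℂ :=
    fun t => ((A (em.symm t).1) ⊗ₖ (B (em.symm t).2)).submatrix ⇑ek.symm id with hC
  set ρ : Matrix (Fin (k₁ * k₂)) (Fin (k₁ * k₂)) ℂ :=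
    (σ ⊗ₖ τ).submatrix ⇑ek.symm ⇑ek.symm with hρ
  -- product identities
  have hCC : ∀ s t : Fin (m₁ * m₂), (C s)ᴴ * C t
      = ((A (em.symm s).1)ᴴ * A (em.symm t).1) ⊗ₖ ((B (em.symm s).2)ᴴ * B (em.symm t).2) := by
    intro s t
    rw [hC]
    rw [Matrix.conjTranspose_submatrix, Matrix.submatrix_mul_equiv, Matrix.submatrix_id_id,
      my_conjT_kron, ← Matrix.mul_kronecker_mul]
  have hCρC : ∀ t : Fin (m₁ * m₂), (C t)ᴴ * ρ * C t
      = ((A (em.symm t).1)ᴴ * σ * A (em.symm t).1) ⊗ₖ ((B (em.symm t).2)ᴴ * τ * B (em.symm t).2) := by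
    intro t
    rw [hC, hρ]
    rw [Matrix.conjTranspose_submatrix, Matrix.submatrix_mul_equiv, Matrix.submatrix_mul_equiv,
      Matrix.submatrix_id_id, my_conjT_kron, ← Matrix.mul_kronecker_mul,
      ← Matrix.mul_kronecker_mul]
  -- the sum identity
  have hsum : ∑ t, (C t)ᴴ * ρ * C t = M₁ ⊗ₖ M₂ :=
    calc ∑ t, (C t)ᴴ * ρ * C t
        = ∑ p : Fin m₁ × Fin m₂, ((A p.1)ᴴ * σ * A p.1) ⊗ₖ ((B p.2)ᴴ * τ * B p.2) :=
          Fintype.sum_equiv em.symm _ _ (fun t => hCρC t)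
      _ = ∑ i, ∑ j, ((A i)ᴴ * σ * A i) ⊗ₖ ((B j)ᴴ * τ * B j) := Fintype.sum_prod_type _
      _ = M₁ ⊗ₖ M₂ := (my_sum_kron_sum _ _).symm
  have hkraus : ∑ t, (C t)ᴴ * C t = 1 :=
    calc ∑ t, (C t)ᴴ * C t
        = ∑ p : Fin m₁ × Fin m₂, ((A p.1)ᴴ * A p.1) ⊗ₖ ((B p.2)ᴴ * B p.2) :=
          Fintype.sum_equiv em.symm _ _ (fun t => hCC t t)
      _ = ∑ i, ∑ j, ((A i)ᴴ * A i) ⊗ₖ ((B j)ᴴ * B j) := Fintype.sum_prod_type _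
      _ = (∑ i, (A i)ᴴ * A i) ⊗ₖ (∑ j, (B j)ᴴ * B j) := (my_sum_kron_sum _ _).symm
      _ = 1 := by rw [hA1, hB1, Matrix.one_kronecker_one]
  -- positive semidefiniteness of ρ
  have hρpsd : ρ.PosSemidef := by
    obtain ⟨P, hP⟩ : ∃ P : Matrix (Fin k₁) (Fin k₁) ℂ, σ = Pᴴ * P := by
      open scoped MatrixOrder in exact CStarAlgebra.nonneg_iff_eq_star_mul_self.mp hσ.nonneg
    obtain ⟨Q, hQ⟩ : ∃ Q : Matrix (Fin k₂) (Fin k₂) ℂ, τ = Qᴴ * Q := by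
      open scoped MatrixOrder in exact CStarAlgebra.nonneg_iff_eq_star_mul_self.mp hτ.nonneg
    have hfac : ρ = ((P ⊗ₖ Q).submatrix id ⇑ek.symm)ᴴ * ((P ⊗ₖ Q).submatrix id ⇑ek.symm) := by
      rw [Matrix.conjTranspose_submatrix]
      have := Matrix.submatrix_mul_equiv ((P ⊗ₖ Q)ᴴ) (P ⊗ₖ Q) ⇑ek.symm (Equiv.refl _) ⇑ek.symm
      simp only [Equiv.coe_refl] at this
      rw [this, hρ, my_conjT_kron, ← Matrix.mul_kronecker_mul, ← hP, ← hQ]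
    rw [hfac]
    exact Matrix.posSemidef_conjTranspose_mul_self _
  -- trace of ρ
  have hρtr : ρ.trace.re ≤ 1 := by
    have htr : ρ.trace = σ.trace * τ.trace := by
      rw [hρ, ← Matrix.trace_kronecker]
      rw [Matrix.trace, Matrix.trace]
      exact Equiv.sum_comp ek.symm fun q => Matrix.diag (σ ⊗ₖ τ) q
    have h1 := Complex.le_def.mp (my_psd_trace hσ)
    have h2 := Complex.le_def.mp (my_psd_trace hτ)
    rw [htr, Complex.mul_re, ← h1.2, ← h2.2]
    simp only [Complex.zero_im, mul_zero, sub_zero, Complex.zero_re] at h1 h2 ⊢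
    exact mul_le_one₀ hσt h2.1 hτt
  -- invertibility
  have hdet₁ : IsUnit M₁.det := (Matrix.isUnit_iff_isUnit_det _).mp hu₁
  have hdet₂ : IsUnit M₂.det := (Matrix.isUnit_iff_isUnit_det _).mp hu₂
  have huM : IsUnit (M₁ ⊗ₖ M₂) := by
    rw [Matrix.isUnit_iff_isUnit_det, Matrix.det_kronecker]
    exact (hdet₁.pow _).mul (hdet₂.pow _)
  have hinv : (M₁ ⊗ₖ M₂)⁻¹ = M₁⁻¹ ⊗ₖ M₂⁻¹ := by
    apply Matrix.inv_eq_right_inv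
    rw [← Matrix.mul_kronecker_mul, Matrix.mul_nonsing_inv _ hdet₁,
      Matrix.mul_nonsing_inv _ hdet₂, Matrix.one_kronecker_one]
  refine ⟨‖(∑ t, (C t)ᴴ * ρ * C t)⁻¹‖, ⟨k₁ * k₂, m₁ * m₂, C, ρ, hkraus, ?_, hρpsd, hρtr, ?_, rfl⟩, ?_⟩
  · intro s t
    rw [hCC s t]
    exact Submodule.subset_span ⟨_, hAS _ _, _, hBS _ _, rfl⟩
  · rw [hsum]; exact huM
  · rw [hsum, hinv]
    exact norm_kron_le _ _

lemma theta_set_nonempty {n : Type} [Fintype n] [DecidableEq n]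
    (S : Submodule ℂ (Matrix n n ℂ)) (hI : (1 : Matrix n n ℂ) ∈ S) :
    {r : ℝ | ∃ (k m : ℕ) (A : Fin m → Matrix (Fin k) n ℂ)
      (σ : Matrix (Fin k) (Fin k) ℂ),
    (∑ i, (A i)ᴴ * A i = 1) ∧ (∀ i j, (A i)ᴴ * A j ∈ S) ∧
    σ.PosSemidef ∧ σ.trace.re ≤ 1 ∧
    IsUnit (∑ i, (A i)ᴴ * σ * A i) ∧
    r = ‖(∑ i, (A i)ᴴ * σ * A i)⁻¹‖}.Nonempty := by
  classical
  set k := Fintype.card n with hk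
  set e : n ≃ Fin k := Fintype.equivFin n with he
  set A : Fin 1 → Matrix (Fin k) n ℂ := fun _ => (1 : Matrix n n ℂ).submatrix ⇑e.symm id with hA
  set c : ℂ := (((k : ℝ)⁻¹ : ℝ) : ℂ) with hc
  set σ : Matrix (Fin k) (Fin k) ℂ := c • 1 with hσ
  have hc0 : (0 : ℂ) ≤ c := by
    rw [hc, Complex.le_def]
    constructor
    · simp [inv_nonneg]
    · simp
  have hAA : (A 0)ᴴ * A 0 = 1 := by
    rw [hA]
    rw [Matrix.conjTranspose_submatrix, Matrix.conjTranspose_one, Matrix.submatrix_mul_equiv,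
      Matrix.submatrix_id_id, Matrix.one_mul]
  have hAσA : (A 0)ᴴ * σ * A 0 = c • (1 : Matrix n n ℂ) := by
    rw [hσ, Matrix.mul_smul, Matrix.mul_one, Matrix.smul_mul, hAA]
  have hsum1 : ∑ i : Fin 1, (A i)ᴴ * A i = 1 := by
    rw [Fin.sum_univ_one, hAA]
  have hsum2 : ∑ i : Fin 1, (A i)ᴴ * σ * A i = c • (1 : Matrix n n ℂ) := by
    rw [Fin.sum_univ_one, hAσA]
  have hσpsd : σ.PosSemidef := by
    have : σ = Matrix.diagonal (fun _ => c) := by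
      rw [hσ]
      ext i j
      by_cases hij : i = j <;> simp [Matrix.diagonal, Matrix.one_apply, hij]
    rw [this]
    exact Matrix.PosSemidef.diagonal fun _ => hc0
  have hσtr : σ.trace.re ≤ 1 := by
    have htr : σ.trace = ((((k:ℝ) * (k : ℝ)⁻¹ : ℝ)) : ℂ) := by
      rw [hσ, Matrix.trace_smul, Matrix.trace_one, smul_eq_mul, Fintype.card_fin, hc,
        ← Complex.ofReal_natCast, ← Complex.ofReal_mul, mul_comm]
    rw [htr, Complex.ofReal_re]
    rcases Nat.eq_zero_or_pos k with h | h
    · simp [h]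
    · have : (k : ℝ) ≠ 0 := Nat.cast_ne_zero.mpr h.ne'
      rw [mul_inv_cancel₀ this]
  have hu : IsUnit (c • (1 : Matrix n n ℂ)) := by
    rw [Matrix.isUnit_iff_isUnit_det, Matrix.det_smul, Matrix.det_one, mul_one]
    rcases Nat.eq_zero_or_pos k with h | h
    · rw [hk] at h
      rw [h, pow_zero]
      exact isUnit_one
    · apply IsUnit.pow
      rw [isUnit_iff_ne_zero, hc]
      simp only [ne_eq, Complex.ofReal_eq_zero, inv_eq_zero, Nat.cast_eq_zero]
      exact h.ne'
  exact ⟨_, k, 1, A, σ, hsum1, fun i j => by rw [Subsingleton.elim i j, Subsingleton.elim j 0, hAA]; exact hI, hσpsd, hσtr, by rw [hsum2]; exact hu, rfl⟩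

/-- `θ̂` is submultiplicative with respect to tensor products. -/
theorem stmt16 (d₁ d₂ : ℕ)
    (S₁ : Submodule ℂ (Matrix (Fin d₁) (Fin d₁) ℂ))
    (S₂ : Submodule ℂ (Matrix (Fin d₂) (Fin d₂) ℂ))
    (hI₁ : (1 : Matrix (Fin d₁) (Fin d₁) ℂ) ∈ S₁)
    (hstar₁ : ∀ A ∈ S₁, Aᴴ ∈ S₁)
    (hI₂ : (1 : Matrix (Fin d₂) (Fin d₂) ℂ) ∈ S₂)
    (hstar₂ : ∀ A ∈ S₂, Aᴴ ∈ S₂) :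
    thetaHat (tensorSystem S₁ S₂) ≤ thetaHat S₁ * thetaHat S₂ := by
  classical
  set P₁ := {r : ℝ | ∃ (k m : ℕ) (A : Fin m → Matrix (Fin k) (Fin d₁) ℂ)
      (σ : Matrix (Fin k) (Fin k) ℂ),
    (∑ i, (A i)ᴴ * A i = 1) ∧ (∀ i j, (A i)ᴴ * A j ∈ S₁) ∧
    σ.PosSemidef ∧ σ.trace.re ≤ 1 ∧
    IsUnit (∑ i, (A i)ᴴ * σ * A i) ∧
    r = ‖(∑ i, (A i)ᴴ * σ * A i)⁻¹‖} with hP₁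
  set P₂ := {r : ℝ | ∃ (k m : ℕ) (A : Fin m → Matrix (Fin k) (Fin d₂) ℂ)
      (σ : Matrix (Fin k) (Fin k) ℂ),
    (∑ i, (A i)ᴴ * A i = 1) ∧ (∀ i j, (A i)ᴴ * A j ∈ S₂) ∧
    σ.PosSemidef ∧ σ.trace.re ≤ 1 ∧
    IsUnit (∑ i, (A i)ᴴ * σ * A i) ∧
    r = ‖(∑ i, (A i)ᴴ * σ * A i)⁻¹‖} with hP₂
  set P := {r : ℝ | ∃ (k m : ℕ) (C : Fin m → Matrix (Fin k) (Fin d₁ × Fin d₂) ℂ)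
      (ρ : Matrix (Fin k) (Fin k) ℂ),
    (∑ i, (C i)ᴴ * C i = 1) ∧ (∀ i j, (C i)ᴴ * C j ∈ tensorSystem S₁ S₂) ∧
    ρ.PosSemidef ∧ ρ.trace.re ≤ 1 ∧
    IsUnit (∑ i, (C i)ᴴ * ρ * C i) ∧
    r = ‖(∑ i, (C i)ᴴ * ρ * C i)⁻¹‖} with hP
  have hT1 : thetaHat (tensorSystem S₁ S₂) = sInf P := rfl
  have hT2 : thetaHat S₁ = sInf P₁ := rfl
  have hT3 : thetaHat S₂ = sInf P₂ := rfl
  rw [hT1, hT2, hT3]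
  have hne₁ : P₁.Nonempty := theta_set_nonempty S₁ hI₁
  have hne₂ : P₂.Nonempty := theta_set_nonempty S₂ hI₂
  have hlb₁ : ∀ r ∈ P₁, (0:ℝ) ≤ r := by
    rintro r ⟨k, m, A, σ, h1, h2, h3, h4, h5, rfl⟩; exact norm_nonneg _
  have hlb₂ : ∀ r ∈ P₂, (0:ℝ) ≤ r := by
    rintro r ⟨k, m, A, σ, h1, h2, h3, h4, h5, rfl⟩; exact norm_nonneg _
  have hlbP : ∀ r ∈ P, (0:ℝ) ≤ r := by
    rintro r ⟨k, m, A, σ, h1, h2, h3, h4, h5, rfl⟩; exact norm_nonneg _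
  have hbddP : BddBelow P := ⟨0, hlbP⟩
  set L := sInf P with hL
  have hmain : ∀ a ∈ P₁, ∀ b ∈ P₂, L ≤ a * b := by
    rintro a ⟨k₁, m₁, A, σ, hA1, hAS, hσ, hσt, hu₁, rfl⟩
      b ⟨k₂, m₂, B, τ, hB1, hBS, hτ, hτt, hu₂, rfl⟩
    obtain ⟨r, hrmem, hrle⟩ :=
      key_mem d₁ d₂ k₁ k₂ m₁ m₂ S₁ S₂ A B σ τ hA1 hAS hσ hσt hu₁ hB1 hBS hτ hτt hu₂
    exact le_trans (csInf_le hbddP hrmem) hrle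
  have step1 : ∀ b ∈ P₂, L ≤ sInf P₁ * b := by
    intro b hb
    have hb0 : 0 ≤ b := hlb₂ b hb
    rcases eq_or_lt_of_le hb0 with h | h
    · obtain ⟨a, ha⟩ := hne₁
      have := hmain a ha b hb
      rw [← h] at this ⊢
      simpa using this
    · have h1 : ∀ a ∈ P₁, L / b ≤ a := fun a ha =>
        (div_le_iff₀ h).mpr (hmain a ha b hb)
      have h2 : L / b ≤ sInf P₁ := le_csInf hne₁ h1
      exact (div_le_iff₀ h).mp h2
  have hs₁0 : 0 ≤ sInf P₁ := Real.sInf_nonneg hlb₁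
  rcases eq_or_lt_of_le hs₁0 with h | h
  · obtain ⟨b, hb⟩ := hne₂
    have := step1 b hb
    rw [← h] at this ⊢
    simpa using this
  · have h1 : ∀ b ∈ P₂, L / sInf P₁ ≤ b := fun b hb =>
      (div_le_iff₀' h).mpr (step1 b hb)
    have h2 : L / sInf P₁ ≤ sInf P₂ := le_csInf hne₂ h1
    exact (div_le_iff₀' h).mp h2
end

section
/- Let (A_n) be a sequence of convex corners in M_d whose union is bounded, converging in the Kuratowski sense to a convex corner A ⊆ M_d. Then θ(A_n) → θ(A), where θ(B) = sup{Tr(B) : B ∈ B}. -/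
open Matrix Filter
open scoped ComplexOrder Matrix.Norms.L2Operator
open scoped Topology

/-- The Kuratowski lower limit of a sequence of sets. -/
def kurLiminf {X : Type*} [TopologicalSpace X] (F : ℕ → Set X) : Set X :=
  {x | ∃ f : ℕ → X, (∀ n, f n ∈ F n) ∧ Filter.Tendsto f Filter.atTop (nhds x)}

/-- The Kuratowski upper limit of a sequence of sets. -/
def kurLimsup {X : Type*} [TopologicalSpace X] (F : ℕ → Set X) : Set X :=
  {x | ∃ f : ℕ → X, (∀ n, f n ∈ F n) ∧ MapClusterPt x Filter.atTop f}

/-- `θ` of a set: the supremum of the (real) trace over the set. -/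
noncomputable def thetaSet {d : ℕ} (A : Set (Matrix (Fin d) (Fin d) ℂ)) : ℝ :=
  sSup {r : ℝ | ∃ M ∈ A, r = M.trace.re}

/-- If a sequence of convex corners with bounded union converges in the
Kuratowski sense to a convex corner `A`, then `θ(A_n) → θ(A)`. -/
theorem stmt18 (d : ℕ) (F : ℕ → Set (Matrix (Fin d) (Fin d) ℂ))
    (hF : ∀ n, IsConvexCorner (F n))
    (hbdd : Bornology.IsBounded (⋃ n, F n))
    (A : Set (Matrix (Fin d) (Fin d) ℂ)) (hA : IsConvexCorner A)
    (hliminf : kurLiminf F = A) (hlimsup : kurLimsup F = A) :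
    Filter.Tendsto (fun n => thetaSet (F n)) Filter.atTop (nhds (thetaSet A)) := by
  classical
  set g : Matrix (Fin d) (Fin d) ℂ → ℝ := fun M => M.trace.re with hgdef
  have hgc : Continuous g :=
    Complex.continuous_re.comp
      (LinearMap.continuous_of_finiteDimensional ((Matrix.traceLinearMap (Fin d) ℝ ℂ)))
  have himg : ∀ S : Set (Matrix (Fin d) (Fin d) ℂ), thetaSet S = sSup (g '' S) := by
    intro S
    unfold thetaSet
    congr 1
    ext r
    simp only [Set.mem_setOf_eq, Set.mem_image, hgdef]
    exact ⟨fun ⟨M, hM, h⟩ => ⟨M, hM, h.symm⟩, fun ⟨M, hM, h⟩ => ⟨M, hM, h.symm⟩⟩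
  have hcompF : ∀ n, IsCompact (F n) := fun n =>
    Metric.isCompact_of_isClosed_isBounded (hF n).isClosed
      (hbdd.subset (Set.subset_iUnion F n))
  -- A is compact
  have hAsub : A ⊆ closure (⋃ n, F n) := by
    intro p hp
    rw [← hlimsup] at hp
    obtain ⟨f, hf, hcl⟩ := hp
    have h1 : p ∈ closure (Set.range f) :=
      mem_closure_iff_clusterPt.2 (hcl.clusterPt.mono (le_principal_iff.2 range_mem_map))
    exact closure_mono (Set.range_subset_iff.2 fun n => Set.mem_iUnion.2 ⟨n, hf n⟩) h1
  have hAcomp : IsCompact A :=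
    Metric.isCompact_of_isClosed_isBounded hA.isClosed (hbdd.closure.subset hAsub)
  -- maximum attained on A
  obtain ⟨M₀, hM₀A, hM₀⟩ := hAcomp.exists_sSup_image_eq hA.nonempty hgc.continuousOn
  have hθA : thetaSet A = g M₀ := by rw [himg, hM₀]
  -- lower bound sequence
  have hM₀lim : M₀ ∈ kurLiminf F := hliminf ▸ hM₀A
  obtain ⟨f, hfF, hftend⟩ := hM₀lim
  have hgf : Tendsto (fun n => g (f n)) atTop (𝓝 (g M₀)) := (hgc.tendsto M₀).comp hftend
  have hle : ∀ n, g (f n) ≤ thetaSet (F n) := by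
    intro n
    rw [himg]
    exact le_csSup ((hcompF n).image hgc).bddAbove ⟨f n, hfF n, rfl⟩
  -- maximizers on each F n
  have hmax : ∀ n, ∃ x ∈ F n, thetaSet (F n) = g x := by
    intro n
    obtain ⟨x, hx, hx2⟩ := (hcompF n).exists_sSup_image_eq (hF n).nonempty hgc.continuousOn
    exact ⟨x, hx, by rw [himg, hx2]⟩
  choose x hxF hxg using hmax
  rw [Metric.tendsto_atTop]
  intro ε hε
  have hlow : ∀ᶠ n in atTop, thetaSet A - ε < thetaSet (F n) := by
    have h' : ∀ᶠ n in atTop, thetaSet A - ε < g (f n) := by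
      refine hgf.eventually (eventually_gt_nhds ?_)
      rw [← hθA]; linarith
    filter_upwards [h'] with n hn
    exact lt_of_lt_of_le hn (hle n)
  have hup : ∀ᶠ n in atTop, thetaSet (F n) < thetaSet A + ε := by
    by_contra hcon
    rw [Filter.not_eventually] at hcon
    have hcon' : ∃ᶠ n in atTop, thetaSet A + ε ≤ thetaSet (F n) := by
      apply hcon.mono; intro n hn; linarith [lt_or_ge (thetaSet (F n)) (thetaSet A + ε), not_lt.1 hn]
    obtain ⟨φ, hφmono, hφ⟩ := Filter.extraction_of_frequently_atTop hcon'
    -- subsequence of maximizers in compact set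
    have hK : IsCompact (closure (⋃ n, F n)) :=
      Metric.isCompact_of_isClosed_isBounded isClosed_closure hbdd.closure
    have hmem : ∀ k, x (φ k) ∈ closure (⋃ n, F n) := fun k =>
      subset_closure (Set.mem_iUnion.2 ⟨φ k, hxF (φ k)⟩)
    obtain ⟨p, hpK, ψ, hψmono, hψtend⟩ := hK.tendsto_subseq hmem
    have hcomp : Tendsto (fun k => x (φ (ψ k))) atTop (𝓝 p) := hψtend
    have hmcp : MapClusterPt p atTop x := by
      refine MapClusterPt.of_comp ((hφmono.comp hψmono).tendsto_atTop) ?_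
      exact hcomp.mapClusterPt
    have hpA : p ∈ A := hlimsup ▸ ⟨x, hxF, hmcp⟩
    have hgp_ge : thetaSet A + ε ≤ g p := by
      refine ge_of_tendsto ((hgc.tendsto p).comp hcomp) (Eventually.of_forall fun k => ?_)
      have := hφ (ψ k)
      rw [hxg (φ (ψ k))] at this
      exact this
    have hgp_le : g p ≤ thetaSet A := by
      rw [himg]
      exact le_csSup (hAcomp.image hgc).bddAbove ⟨p, hpA, rfl⟩
    linarith
  obtain ⟨N, hN⟩ := eventually_atTop.1 (hlow.and hup)
  refine ⟨N, fun n hn => ?_⟩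
  obtain ⟨h1, h2⟩ := hN n hn
  rw [Real.dist_eq, abs_sub_lt_iff]
  constructor <;> linarith
end

section
/- Let A ⊆ M_d⁺ and let (A_n) be a sequence of nonempty subsets of M_d⁺ with bounded union such that limsup_n A_n ⊆ A (every cluster point of a sequence x_n ∈ A_n lies in A). Then A^♯ ⊆ liminf_n A_n^♯, i.e. every T ∈ A^♯ is a limit of a sequence T_n ∈ A_n^♯. -/
open Matrix Filter
open scoped ComplexOrder Matrix.Norms.L2Operator

/-- A positive semidefinite matrix scaled by a nonnegative real is positive semidefinite. -/
lemma psd_real_smul {d : ℕ} {T : Matrix (Fin d) (Fin d) ℂ} (hT : T.PosSemidef) {c : ℝ}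
    (hc : 0 ≤ c) : (c • T).PosSemidef := by
  refine Matrix.PosSemidef.of_dotProduct_mulVec_nonneg ?_ ?_
  · unfold Matrix.IsHermitian
    rw [conjTranspose_smul, hT.1.eq, star_trivial]
  · intro x
    rw [smul_mulVec, dotProduct_smul, Complex.real_smul]
    exact mul_nonneg (by exact_mod_cast hc) (hT.dotProduct_mulVec_nonneg x)

/-- If `(A_n)` are nonempty subsets of the positive cone with bounded union
and `limsup_n A_n ⊆ A ⊆ M_d⁺`, then `A^♯ ⊆ liminf_n A_n^♯`. -/
theorem stmt19 (d : ℕ) (A : Set (Matrix (Fin d) (Fin d) ℂ))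
    (F : ℕ → Set (Matrix (Fin d) (Fin d) ℂ))
    (hApos : ∀ M ∈ A, M.PosSemidef)
    (hFne : ∀ n, (F n).Nonempty)
    (hFpos : ∀ n, ∀ M ∈ F n, M.PosSemidef)
    (hbdd : Bornology.IsBounded (⋃ n, F n))
    (hsub : kurLimsup F ⊆ A) :
    antiBlocker A ⊆ kurLiminf (fun n => antiBlocker (F n)) := by
  intro T hT
  -- the continuous linear functional `g M = Re (Tr (M * T))`
  set g : Matrix (Fin d) (Fin d) ℂ →L[ℝ] ℝ :=
    LinearMap.toContinuousLinearMap
      (Complex.reLm.comp (((Matrix.traceLinearMap (Fin d) ℂ ℂ).restrictScalars ℝ).comp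
        ((LinearMap.mulRight ℂ T).restrictScalars ℝ))) with hg
  have hgval : ∀ M, g M = (M * T).trace.re := fun M => rfl
  -- the scaling factors
  set s : ℕ → ℝ := fun n => max 1 (sSup (g '' F n)) with hs
  have hbddA : ∀ n, BddAbove (g '' F n) := fun n =>
    ((g.lipschitz.isBounded_image (hbdd.subset (Set.subset_iUnion F n)))).bddAbove
  have hs1 : ∀ n, 1 ≤ s n := fun n => le_max_left _ _
  have hs0 : ∀ n, 0 ≤ (s n)⁻¹ := fun n => inv_nonneg.mpr (le_trans zero_le_one (hs1 n))
  have hsle : ∀ n, ∀ M ∈ F n, g M ≤ s n := fun n M hM =>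
    le_trans (le_csSup (hbddA n) ⟨M, hM, rfl⟩) (le_max_right _ _)
  -- the scaling factors tend to 1
  have hstend : Tendsto s atTop (nhds 1) := by
    refine tendsto_order.2 ⟨fun a ha => Eventually.of_forall fun n => lt_of_lt_of_le ha (hs1 n), ?_⟩
    intro b hb
    by_contra hcon
    have hfreq : ∃ᶠ n in atTop, b ≤ s n := by
      simpa only [not_eventually, not_lt] using hcon
    -- choose elements of `F n` with large pairing against `T` at bad indices
    have hchoice : ∀ n, ∃ M ∈ F n, (b ≤ s n → (1 + b) / 2 < g M) := by
      intro n
      by_cases h : b ≤ s n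
      · have hsup : (1 + b) / 2 < sSup (g '' F n) := by
          have : b ≤ sSup (g '' F n) := by
            rcases le_max_iff.mp (hs ▸ h) with h1 | h2
            · linarith
            · exact h2
          linarith
        obtain ⟨y, ⟨M, hM, rfl⟩, hy⟩ := exists_lt_of_lt_csSup
          (Set.Nonempty.image g (hFne n)) hsup
        exact ⟨M, hM, fun _ => hy⟩
      · exact ⟨(hFne n).some, (hFne n).some_mem, fun h' => absurd h' h⟩
    choose f hfF hfg using hchoice
    obtain ⟨φ, hφmono, hφP⟩ := extraction_of_frequently_atTop hfreq
    obtain ⟨x, -, θ, hθmono, hθtend⟩ := tendsto_subseq_of_bounded hbdd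
      (fun k : ℕ => Set.mem_iUnion.2 ⟨φ k, hfF (φ k)⟩)
    have hxA : x ∈ A := hsub ⟨f, hfF, MapClusterPt.of_comp
      ((hφmono.comp hθmono).tendsto_atTop) (Filter.Tendsto.mapClusterPt hθtend)⟩
    have hle : (1 + b) / 2 ≤ g x := by
      refine le_of_tendsto_of_tendsto tendsto_const_nhds
        ((g.continuous.tendsto x).comp hθtend) (Eventually.of_forall fun k => ?_)
      exact le_of_lt (hfg (φ (θ k)) (hφP (θ k)))
    have : g x ≤ 1 := hgval x ▸ hT.2 x hxA
    linarith
  -- the approximating sequence in the anti-blockers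
  refine ⟨fun n => (s n)⁻¹ • T, fun n => ?_, ?_⟩
  · refine ⟨psd_real_smul hT.1 (hs0 n), fun M hM => ?_⟩
    have : (M * ((s n)⁻¹ • T)).trace.re = (s n)⁻¹ * g M := by
      rw [hgval, Matrix.mul_smul, Matrix.trace_smul, Complex.real_smul, Complex.re_ofReal_mul]
    rw [this]
    calc (s n)⁻¹ * g M ≤ (s n)⁻¹ * s n := by
          exact mul_le_mul_of_nonneg_left (hsle n M hM) (hs0 n)
      _ ≤ 1 := by
          rw [inv_mul_cancel₀ (by positivity : s n ≠ 0)]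
  · have : Tendsto (fun n => (s n)⁻¹ • T) atTop (nhds ((1 : ℝ)⁻¹ • T)) :=
      (hstend.inv₀ one_ne_zero).smul_const T
    simpa using this
end
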